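/- arXiv:1803.03728 — 7 statements merged into one kernel-verified Lean document; each statement's English description precedes it below -/
import Mathlib

section
/- If v₁, ..., vₙ are distinct unit vectors in ℝ² with n ≥ 3 summing to zero, and they are listed in counterclockwise (angular) order, then the angle between any two angularly consecutive vectors is strictly less than 180°. -/
open Real

/-- If `v i = (cos (θ i), sin (θ i))` are `n ≥ 3` distinct unit vectors in the
plane summing to zero, listed in counterclockwise (angular) order (`θ` strictly increasing
in `[0, 2π)`), then the counterclockwise angle between any two angularly consecutive
vectors is strictly less than `π` (i.e. 180°). -/
theorem consecutive_gap_lt_pi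
    (n : ℕ) [NeZero n] (hn : 3 ≤ n) (θ : Fin n → ℝ)
    (hrange : ∀ i, θ i ∈ Set.Ico 0 (2 * π))
    (hmono : StrictMono θ)
    (hcos : ∑ i, Real.cos (θ i) = 0)
    (hsin : ∑ i, Real.sin (θ i) = 0) :
    ∀ i : Fin n,
      (if (i : ℕ) + 1 < n then θ (i + 1) - θ i else θ (i + 1) + 2 * π - θ i) < π := by
  have hπ := Real.pi_pos
  intro i
  by_contra hcon
  have key : ∀ α : ℝ, ∑ j, Real.cos (θ j - α) = 0 := by
    intro α
    simp_rw [Real.cos_sub]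
    rw [Finset.sum_add_distrib, ← Finset.sum_mul, ← Finset.sum_mul, hcos, hsin]
    ring
  by_cases h : (i : ℕ) + 1 < n
  · rw [if_pos h, not_lt] at hcon
    have hv1 : ((i + 1 : Fin n) : ℕ) = (i : ℕ) + 1 := by
      rw [Fin.add_def]
      simp only [Fin.val_one' n]
      rw [Nat.mod_eq_of_lt (show 1 < n by omega), Nat.mod_eq_of_lt h]
    set a := θ i with ha
    set b := θ (i + 1) with hb
    have ha0 : 0 ≤ a := (hrange i).1
    have hb2 : b < 2 * π := (hrange (i + 1)).2
    set α := (a + b) / 2 - π with hα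
    have hnonneg : ∀ j ∈ Finset.univ, 0 ≤ Real.cos (θ j - α) := by
      intro j _
      rcases le_or_gt (j : ℕ) (i : ℕ) with hj | hj
      · have hja : θ j ≤ a := hmono.monotone (by rwa [Fin.le_def])
        have hj0 : 0 ≤ θ j := (hrange j).1
        apply Real.cos_nonneg_of_mem_Icc
        constructor <;> [skip; skip] <;> simp only [hα] <;> linarith
      · have hjb : b ≤ θ j := hmono.monotone (by rw [Fin.le_def, hv1]; omega)
        have hj2 : θ j < 2 * π := (hrange j).2
        rw [← Real.cos_sub_two_pi]
        apply Real.cos_nonneg_of_mem_Icc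
        constructor <;> simp only [hα] <;> linarith
    have hzero := (Finset.sum_eq_zero_iff_of_nonneg hnonneg).mp (key α)
    rcases Nat.eq_zero_or_pos (i : ℕ) with hi0 | hi0
    · -- take the last index, whose angle is strictly greater than b
      have hlast : (i : ℕ) + 1 < n - 1 + 1 := by omega
      set j : Fin n := ⟨n - 1, by omega⟩ with hjdef
      have hjb : b < θ j := by
        apply hmono
        rw [Fin.lt_def, hv1]
        simp [hjdef]; omega
      have hj2 : θ j < 2 * π := (hrange j).2
      have hpos : 0 < Real.cos (θ j - α) := by
        rw [← Real.cos_sub_two_pi]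
        apply Real.cos_pos_of_mem_Ioo
        constructor <;> simp only [hα] <;> linarith
      have := hzero j (Finset.mem_univ j)
      linarith
    · -- take index 0, whose angle is strictly less than a
      set j : Fin n := ⟨0, by omega⟩ with hjdef
      have hja : θ j < a := by
        apply hmono
        rw [Fin.lt_def]
        simpa [hjdef] using hi0
      have hj0 : 0 ≤ θ j := (hrange j).1
      have hpos : 0 < Real.cos (θ j - α) := by
        apply Real.cos_pos_of_mem_Ioo
        constructor <;> simp only [hα] <;> linarith
      have := hzero j (Finset.mem_univ j)
      linarith
  · -- wrap-around case: i is the last index and i + 1 = 0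
    have hval : (i : ℕ) = n - 1 := by have := i.isLt; omega
    have hi10 : i + 1 = (0 : Fin n) := by
      apply Fin.ext
      rw [Fin.add_def]
      simp only [Fin.val_one' n, Fin.val_zero]
      rw [Nat.mod_eq_of_lt (show 1 < n by omega), hval,
        show n - 1 + 1 = n by omega, Nat.mod_self]
    rw [if_neg h, hi10, not_lt] at hcon
    -- hcon : π ≤ θ 0 + 2 * π - θ i, i.e. θ i - θ 0 ≤ π
    set a := θ 0 with ha
    set b := θ i with hb
    set α := (a + b) / 2 with hα
    have hnonneg : ∀ j ∈ Finset.univ, 0 ≤ Real.cos (θ j - α) := by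
      intro j _
      have hja : a ≤ θ j := hmono.monotone (by rw [Fin.le_def]; simp)
      have hjb : θ j ≤ b := hmono.monotone (by rw [Fin.le_def]; omega)
      apply Real.cos_nonneg_of_mem_Icc
      constructor <;> simp only [hα] <;> linarith
    have hzero := (Finset.sum_eq_zero_iff_of_nonneg hnonneg).mp (key α)
    set j : Fin n := ⟨1, by omega⟩ with hjdef
    have hja : a < θ j := by
      apply hmono
      rw [Fin.lt_def]
      simp [hjdef]
    have hjb : θ j < b := by
      apply hmono
      rw [Fin.lt_def]
      simp [hjdef]; omega
    have hpos : 0 < Real.cos (θ j - α) := by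
      apply Real.cos_pos_of_mem_Ioo
      constructor <;> simp only [hα] <;> linarith
    have := hzero j (Finset.mem_univ j)
    linarith
end

section
/- Let v₁, ..., vₙ (n ≥ 3) be unit vectors in ℝ² summing to zero, listed in counterclockwise angular order. Then for every i, the combined angle at vᵢ, defined as the counterclockwise angle from vᵢ₋₁ to vᵢ₊₁ (indices mod n), satisfies: it equals 240° if n = 3, it equals 180° if n = 4, and it is strictly less than 180° + 2·arcsin(1/(n−1)) if n ≥ 5. In particular the combined angle is always at most 240°, with strict inequality when n > 3. -/
open Real

/-- The counterclockwise angular gap from `v i` to the angularly next vector `v (i+1)`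
(indices mod `n`), for unit vectors `v i = (cos (θ i), sin (θ i))` listed in strictly
increasing angular order in `[0, 2π)`. -/
noncomputable def angGap (n : ℕ) [NeZero n] (θ : Fin n → ℝ) (i : Fin n) : ℝ :=
  if (i : ℕ) + 1 < n then θ (i + 1) - θ i else θ (i + 1) + 2 * π - θ i

/-- The combined angle at `v i`: the counterclockwise angle from `v (i-1)` to `v (i+1)`. -/
noncomputable def combinedAngle (n : ℕ) [NeZero n] (θ : Fin n → ℝ) (i : Fin n) : ℝ :=
  angGap n θ (i - 1) + angGap n θ i

lemma cos_eq_cases (x y : ℝ) (hx0 : 0 ≤ x) (hx2 : x ≤ 2*π) (hy0 : 0 ≤ y) (hy2 : y ≤ 2*π)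
    (h : Real.cos x = Real.cos y) : x = y ∨ x + y = 2*π := by
  have inj := Real.injOn_cos
  rcases le_or_gt x π with hx | hx <;> rcases le_or_gt y π with hy | hy
  · exact Or.inl (inj ⟨hx0, hx⟩ ⟨hy0, hy⟩ h)
  · right
    have h2 : Real.cos (2*π - y) = Real.cos y := Real.cos_two_pi_sub y
    have := inj ⟨hx0, hx⟩ ⟨by linarith, by linarith⟩ (h.trans h2.symm)
    linarith
  · right
    have h2 : Real.cos (2*π - x) = Real.cos x := Real.cos_two_pi_sub x
    have := inj ⟨by linarith, by linarith⟩ ⟨hy0, hy⟩ (h2.trans h)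
    linarith
  · left
    have hcc : Real.cos (2*π - x) = Real.cos (2*π - y) := by
      rw [Real.cos_two_pi_sub, Real.cos_two_pi_sub]; exact h
    have := inj (Set.mem_Icc.mpr ⟨by linarith, by linarith⟩)
      (Set.mem_Icc.mpr ⟨by linarith, by linarith⟩) hcc
    linarith

lemma cos_eq_neg_half (x : ℝ) (h1 : 0 < x) (h2 : x < 2*π) (h : Real.cos x = -(1/2)) :
    x = 2*π/3 ∨ x = 4*π/3 := by
  have hπ := Real.pi_pos
  have hc : Real.cos (2*π/3) = -(1/2) := by
    rw [show (2*π/3) = π - π/3 by ring, Real.cos_pi_sub, Real.cos_pi_div_three]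
  rcases cos_eq_cases x (2*π/3) h1.le h2.le (by linarith) (by linarith) (h.trans hc.symm) with
    h' | h'
  · exact Or.inl h'
  · right; linarith

lemma lemma3 (θ : Fin 3 → ℝ) (hrange : ∀ i, θ i ∈ Set.Ico 0 (2 * π))
    (hmono : StrictMono θ)
    (hcos : ∑ i, Real.cos (θ i) = 0) (hsin : ∑ i, Real.sin (θ i) = 0) :
    ∀ i, combinedAngle 3 θ i = 4 * π / 3 := by
  have hπ := Real.pi_pos
  rw [Fin.sum_univ_three] at hcos hsin
  have h01 : θ 0 < θ 1 := hmono (by decide)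
  have h12 : θ 1 < θ 2 := hmono (by decide)
  obtain ⟨h00, h02⟩ := hrange 0
  obtain ⟨h10, h12'⟩ := hrange 1
  obtain ⟨h20, h22⟩ := hrange 2
  have p0 := Real.sin_sq_add_cos_sq (θ 0)
  have pa := Real.sin_sq_add_cos_sq (θ 1 - θ 0)
  have pb := Real.sin_sq_add_cos_sq (θ 2 - θ 0)
  have hA : Real.cos (θ 1 - θ 0) + Real.cos (θ 2 - θ 0) = -1 := by
    rw [Real.cos_sub, Real.cos_sub]
    linear_combination (Real.cos (θ 0)) * hcos + (Real.sin (θ 0)) * hsin - p0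
  have hB : Real.sin (θ 1 - θ 0) + Real.sin (θ 2 - θ 0) = 0 := by
    rw [Real.sin_sub, Real.sin_sub]
    linear_combination (Real.cos (θ 0)) * hsin - (Real.sin (θ 0)) * hcos
  have hcb : Real.cos (θ 2 - θ 0) = -(1/2) := by
    linear_combination (1/2) * pa - (1/2) * pb
      - (1/2) * (Real.sin (θ 1 - θ 0) - Real.sin (θ 2 - θ 0)) * hB
      + (1/2) * (1 - Real.cos (θ 1 - θ 0) + Real.cos (θ 2 - θ 0)) * hA
  have hca : Real.cos (θ 1 - θ 0) = -(1/2) := by linarith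
  have g0 : angGap 3 θ 0 = θ 1 - θ 0 := by
    rw [angGap, if_pos (by decide), show ((0:Fin 3) + 1) = 1 from rfl]
  have g1 : angGap 3 θ 1 = θ 2 - θ 1 := by
    rw [angGap, if_pos (by decide), show ((1:Fin 3) + 1) = 2 from rfl]
  have g2 : angGap 3 θ 2 = θ 0 + 2 * π - θ 2 := by
    rw [angGap, if_neg (by decide), show ((2:Fin 3) + 1) = 0 from rfl]
  rcases cos_eq_neg_half _ (by linarith) (by linarith) hca with ha | ha <;>
    rcases cos_eq_neg_half _ (by linarith) (by linarith) hcb with hb | hb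
  · linarith
  · intro i
    fin_cases i
    · rw [show (⟨0, by omega⟩ : Fin 3) = 0 from rfl, combinedAngle,
        show (0:Fin 3) - 1 = 2 from rfl, g2, g0]; linarith
    · rw [show (⟨1, by omega⟩ : Fin 3) = 1 from rfl, combinedAngle,
        show (1:Fin 3) - 1 = 0 from rfl, g0, g1]; linarith
    · rw [show (⟨2, by omega⟩ : Fin 3) = 2 from rfl, combinedAngle,
        show (2:Fin 3) - 1 = 1 from rfl, g1, g2]; linarith
  · linarith
  · linarith

lemma lemma4 (θ : Fin 4 → ℝ) (hrange : ∀ i, θ i ∈ Set.Ico 0 (2 * π))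
    (hmono : StrictMono θ)
    (hcos : ∑ i, Real.cos (θ i) = 0) (hsin : ∑ i, Real.sin (θ i) = 0) :
    ∀ i, combinedAngle 4 θ i = π := by
  have hπ := Real.pi_pos
  rw [Fin.sum_univ_four] at hcos hsin
  have h01 : θ 0 < θ 1 := hmono (by decide)
  have h12 : θ 1 < θ 2 := hmono (by decide)
  have h23 : θ 2 < θ 3 := hmono (by decide)
  obtain ⟨h00, h02⟩ := hrange 0
  obtain ⟨h10, h12'⟩ := hrange 1
  obtain ⟨h20, h22⟩ := hrange 2
  obtain ⟨h30, h32⟩ := hrange 3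
  have p0 := Real.sin_sq_add_cos_sq (θ 0)
  have p1 := Real.sin_sq_add_cos_sq (θ 1)
  have p2 := Real.sin_sq_add_cos_sq (θ 2)
  have p3 := Real.sin_sq_add_cos_sq (θ 3)
  have P1 : Real.cos (θ 1 - θ 0) = Real.cos (θ 3 - θ 2) := by
    rw [Real.cos_sub, Real.cos_sub]
    linear_combination (1/2) * (Real.cos (θ 0) + Real.cos (θ 1) - Real.cos (θ 2) - Real.cos (θ 3)) * hcos
      + (1/2) * (Real.sin (θ 0) + Real.sin (θ 1) - Real.sin (θ 2) - Real.sin (θ 3)) * hsin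
      - (1/2) * p0 - (1/2) * p1 + (1/2) * p2 + (1/2) * p3
  have P2 : Real.cos (θ 3 - θ 0) = Real.cos (θ 2 - θ 1) := by
    rw [Real.cos_sub, Real.cos_sub]
    linear_combination (1/2) * (Real.cos (θ 0) + Real.cos (θ 3) - Real.cos (θ 1) - Real.cos (θ 2)) * hcos
      + (1/2) * (Real.sin (θ 0) + Real.sin (θ 3) - Real.sin (θ 1) - Real.sin (θ 2)) * hsin
      - (1/2) * p0 - (1/2) * p3 + (1/2) * p1 + (1/2) * p2
  have hA : θ 1 - θ 0 = θ 3 - θ 2 := by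
    rcases cos_eq_cases _ _ (by linarith) (by linarith) (by linarith) (by linarith) P1 with h | h
    · exact h
    · linarith
  have hBB : (θ 3 - θ 0) + (θ 2 - θ 1) = 2 * π := by
    rcases cos_eq_cases _ _ (by linarith) (by linarith) (by linarith) (by linarith) P2 with h | h
    · linarith
    · exact h
  have g0 : angGap 4 θ 0 = θ 1 - θ 0 := by
    rw [angGap, if_pos (by decide), show ((0:Fin 4) + 1) = 1 from rfl]
  have g1 : angGap 4 θ 1 = θ 2 - θ 1 := by
    rw [angGap, if_pos (by decide), show ((1:Fin 4) + 1) = 2 from rfl]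
  have g2 : angGap 4 θ 2 = θ 3 - θ 2 := by
    rw [angGap, if_pos (by decide), show ((2:Fin 4) + 1) = 3 from rfl]
  have g3 : angGap 4 θ 3 = θ 0 + 2 * π - θ 3 := by
    rw [angGap, if_neg (by decide), show ((3:Fin 4) + 1) = 0 from rfl]
  intro i
  fin_cases i
  · rw [show (⟨0, by omega⟩ : Fin 4) = 0 from rfl, combinedAngle,
      show (0:Fin 4) - 1 = 3 from rfl, g3, g0]; linarith
  · rw [show (⟨1, by omega⟩ : Fin 4) = 1 from rfl, combinedAngle,
      show (1:Fin 4) - 1 = 0 from rfl, g0, g1]; linarith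
  · rw [show (⟨2, by omega⟩ : Fin 4) = 2 from rfl, combinedAngle,
      show (2:Fin 4) - 1 = 1 from rfl, g1, g2]; linarith
  · rw [show (⟨3, by omega⟩ : Fin 4) = 3 from rfl, combinedAngle,
      show (3:Fin 4) - 1 = 2 from rfl, g2, g3]; linarith

lemma lemmaBound (n : ℕ) [NeZero n] (hn : 4 ≤ n) (θ : Fin n → ℝ)
    (hrange : ∀ i, θ i ∈ Set.Ico 0 (2 * π))
    (hmono : StrictMono θ)
    (hcos : ∑ i, Real.cos (θ i) = 0) (hsin : ∑ i, Real.sin (θ i) = 0)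
    (i : Fin n) :
    combinedAngle n θ i < π + 2 * Real.arcsin (1 / ((n : ℝ) - 1)) := by
  have hπ := Real.pi_pos
  set cd : Fin n → Fin n → ℝ :=
    fun a b => if a ≤ b then θ b - θ a else θ b + 2 * π - θ a with hcdd
  have cd_of_le : ∀ a b : Fin n, (a:ℕ) ≤ (b:ℕ) → cd a b = θ b - θ a := by
    intro a b h; simp only [hcdd]; rw [if_pos (Fin.le_def.mpr h)]
  have cd_of_gt : ∀ a b : Fin n, (b:ℕ) < (a:ℕ) → cd a b = θ b + 2 * π - θ a := by
    intro a b h; simp only [hcdd]; rw [if_neg (by rw [Fin.le_def]; omega)]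
  have cd_pos : ∀ a b : Fin n, a ≠ b → 0 < cd a b := by
    intro a b hab
    have hv : (a:ℕ) ≠ (b:ℕ) := fun h => hab (Fin.ext h)
    rcases Nat.lt_or_ge (a:ℕ) (b:ℕ) with h | h
    · rw [cd_of_le a b h.le]
      have := hmono (Fin.lt_def.mpr h); linarith
    · rw [cd_of_gt a b (by omega)]
      have h1 := (hrange a).2; have h2 := (hrange b).1; linarith
  have cd_mod : ∀ a b : Fin n, cd a b = θ b - θ a ∨ cd a b = θ b - θ a + 2 * π := by
    intro a b; simp only [hcdd]; split_ifs
    · exact Or.inl rfl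
    · exact Or.inr (by ring)
  have hiv : (i:ℕ) < n := i.isLt
  have v1 : ((1 : Fin n) : ℕ) = 1 := by rw [Fin.val_one', Nat.mod_eq_of_lt (by omega)]
  have hNv' : ((i + 1 : Fin n) : ℕ) = if (i:ℕ) + 1 = n then 0 else (i:ℕ) + 1 := by
    rw [Fin.val_add, v1]; split_ifs with h
    · rw [h, Nat.mod_self]
    · exact Nat.mod_eq_of_lt (by omega)
  have hPv : ((i - 1 : Fin n) : ℕ) = if (i:ℕ) = 0 then n - 1 else (i:ℕ) - 1 := by
    rw [Fin.sub_def]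
    simp only [v1]
    split_ifs with h
    · show (n - 1 + (i:ℕ)) % n = n - 1
      rw [h, Nat.add_zero]; exact Nat.mod_eq_of_lt (by omega)
    · show (n - 1 + (i:ℕ)) % n = (i:ℕ) - 1
      have he : n - 1 + (i:ℕ) = ((i:ℕ) - 1) + n := by omega
      rw [he, Nat.add_mod_right]; exact Nat.mod_eq_of_lt (by omega)
  have ne1 : (i - 1 : Fin n) ≠ i := by
    intro h; have := congrArg Fin.val h; rw [hPv] at this; split_ifs at this <;> omega
  have ne2 : i ≠ i + 1 := by
    intro h; have := congrArg Fin.val h; rw [hNv'] at this; split_ifs at this <;> omega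
  have ne3 : (i + 1 : Fin n) ≠ (i - 1 : Fin n) := by
    intro h; have := congrArg Fin.val h; rw [hNv', hPv] at this
    split_ifs at this <;> omega
  have angGap_eq : ∀ j : Fin n, angGap n θ j = cd j (j + 1) := by
    intro j
    by_cases h : (j:ℕ) + 1 < n
    · have hval : ((j + 1 : Fin n):ℕ) = (j:ℕ) + 1 := by
        rw [Fin.val_add, v1]; exact Nat.mod_eq_of_lt h
      rw [angGap, if_pos h, cd_of_le _ _ (by omega)]
    · have hjlt : (j:ℕ) < n := j.isLt
      have hval : ((j + 1 : Fin n):ℕ) = 0 := by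
        rw [Fin.val_add, v1, show (j:ℕ) + 1 = n by omega, Nat.mod_self]
      rw [angGap, if_neg h, cd_of_gt _ _ (by omega)]
  have main : cd (i-1) i + cd i (i+1) + cd (i+1) (i-1) = 2 * π ∧
      ∀ j : Fin n, j ≠ i - 1 → j ≠ i → j ≠ i + 1 → cd (i+1) j < cd (i+1) (i-1) := by
    rcases Nat.eq_zero_or_pos (i:ℕ) with h0 | h0
    · have hP : ((i-1:Fin n):ℕ) = n - 1 := by rw [hPv, if_pos h0]
      have hN : ((i+1:Fin n):ℕ) = 1 := by rw [hNv', if_neg (by omega)]; omega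
      constructor
      · rw [cd_of_gt _ _ (by omega), cd_of_le _ _ (by omega), cd_of_le _ _ (by omega)]
        ring
      · intro j hj1 hj2 hj3
        have hjv1 : (j:ℕ) ≠ n - 1 := fun h => hj1 (Fin.ext (by rw [hP]; exact h))
        have hjv2 : (j:ℕ) ≠ 0 := fun h => hj2 (Fin.ext (by omega))
        have hjv3 : (j:ℕ) ≠ 1 := fun h => hj3 (Fin.ext (by rw [hN]; exact h))
        have hjlt : (j:ℕ) < n := j.isLt
        rw [cd_of_le _ _ (by omega), cd_of_le _ _ (by omega)]
        have : θ j < θ (i-1) := hmono (Fin.lt_def.mpr (by omega))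
        linarith
    · rcases Nat.lt_or_ge ((i:ℕ)+1) n with hlast | hlast
      · have hP : ((i-1:Fin n):ℕ) = (i:ℕ) - 1 := by rw [hPv, if_neg (by omega)]
        have hN : ((i+1:Fin n):ℕ) = (i:ℕ) + 1 := by rw [hNv', if_neg (by omega)]
        constructor
        · rw [cd_of_le _ _ (by omega), cd_of_le _ _ (by omega), cd_of_gt _ _ (by omega)]
          ring
        · intro j hj1 hj2 hj3
          have hjv1 : (j:ℕ) ≠ (i:ℕ) - 1 := fun h => hj1 (Fin.ext (by rw [hP]; exact h))
          have hjv2 : (j:ℕ) ≠ (i:ℕ) := fun h => hj2 (Fin.ext h)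
          have hjv3 : (j:ℕ) ≠ (i:ℕ) + 1 := fun h => hj3 (Fin.ext (by rw [hN]; exact h))
          have hjlt : (j:ℕ) < n := j.isLt
          rcases Nat.lt_or_ge (j:ℕ) (i:ℕ) with hc | hc
          · rw [cd_of_gt _ _ (by omega), cd_of_gt _ _ (by omega)]
            have : θ j < θ (i-1) := hmono (Fin.lt_def.mpr (by omega))
            linarith
          · rw [cd_of_le _ _ (by omega), cd_of_gt _ _ (by omega)]
            have h1 := (hrange j).2
            have h2 := (hrange (i-1)).1
            linarith
      · have hiv' : (i:ℕ) = n - 1 := by omega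
        have hP : ((i-1:Fin n):ℕ) = n - 2 := by rw [hPv, if_neg (by omega)]; omega
        have hN : ((i+1:Fin n):ℕ) = 0 := by rw [hNv', if_pos (by omega)]
        constructor
        · rw [cd_of_le _ _ (by omega), cd_of_gt _ _ (by omega), cd_of_le _ _ (by omega)]
          ring
        · intro j hj1 hj2 hj3
          have hjv1 : (j:ℕ) ≠ n - 2 := fun h => hj1 (Fin.ext (by rw [hP]; exact h))
          have hjv2 : (j:ℕ) ≠ n - 1 := fun h => hj2 (Fin.ext (by omega))
          have hjv3 : (j:ℕ) ≠ 0 := fun h => hj3 (Fin.ext (by rw [hN]; exact h))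
          have hjlt : (j:ℕ) < n := j.isLt
          rw [cd_of_le _ _ (by omega), cd_of_le _ _ (by omega)]
          have : θ j < θ (i-1) := hmono (Fin.lt_def.mpr (by omega))
          linarith
  obtain ⟨htriple, hbetween⟩ := main
  have hgap1 : angGap n θ (i-1) = cd (i-1) i := by
    rw [angGap_eq (i-1), sub_add_cancel]
  have hgap2 : angGap n θ i = cd i (i+1) := angGap_eq i
  set β := combinedAngle n θ i with hβ
  have hβeq : β = cd (i-1) i + cd i (i+1) := by
    rw [hβ, combinedAngle, hgap1, hgap2]
  have hβpos : 0 < β := by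
    have c1 := cd_pos _ _ ne1; have c2 := cd_pos _ _ ne2; rw [hβeq]; linarith
  have hδP : cd (i+1) (i-1) = 2*π - β := by rw [hβeq]; linarith [htriple]
  have hβlt : β < 2*π := by have := cd_pos _ _ ne3; linarith [hδP]
  set m := π - β/2 with hm
  have hm0 : 0 < m := by rw [hm]; linarith
  have hmπ : m < π := by rw [hm]; linarith
  clear_value β m
  have key : ∀ j : Fin n, Real.cos (cd (i+1) j - m) =
      Real.cos (θ j) * Real.cos (θ (i+1) + m) + Real.sin (θ j) * Real.sin (θ (i+1) + m) := by
    intro j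
    rcases cd_mod (i+1) j with h | h
    · rw [h, show θ j - θ (i+1) - m = θ j - (θ (i+1) + m) by ring, Real.cos_sub]
    · rw [h, show θ j - θ (i+1) + 2*π - m = θ j - (θ (i+1) + m) + 2*π by ring,
        Real.cos_add_two_pi, Real.cos_sub]
  have hsum0 : ∑ j, Real.cos (cd (i+1) j - m) = 0 := by
    rw [Finset.sum_congr rfl (fun j _ => key j), Finset.sum_add_distrib,
      ← Finset.sum_mul, ← Finset.sum_mul, hcos, hsin]
    ring
  set T : Finset (Fin n) := {i - 1, i, i + 1} with hT
  have hmem1 : (i - 1 : Fin n) ∉ ({i, i + 1} : Finset (Fin n)) := by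
    simp only [Finset.mem_insert, Finset.mem_singleton]
    push_neg
    exact ⟨ne1, Ne.symm ne3⟩
  have hmem2 : i ∉ ({i + 1} : Finset (Fin n)) := by
    simp only [Finset.mem_singleton]; exact ne2
  have hTcard : T.card = 3 := by
    rw [hT, Finset.card_insert_of_notMem hmem1, Finset.card_insert_of_notMem hmem2,
      Finset.card_singleton]
  have hsplit : ∑ j, Real.cos (cd (i+1) j - m) =
      (∑ j ∈ Finset.univ \ T, Real.cos (cd (i+1) j - m)) +
      (Real.cos (cd (i+1) (i-1) - m) + Real.cos (cd (i+1) i - m)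
        + Real.cos (cd (i+1) (i+1) - m)) := by
    rw [← Finset.sum_sdiff (Finset.subset_univ T)]
    congr 1
    rw [hT, Finset.sum_insert hmem1, Finset.sum_insert hmem2, Finset.sum_singleton]
    ring
  have t1 : Real.cos (cd (i+1) (i-1) - m) = Real.cos m := by
    rw [hδP]; congr 1; rw [hm]; ring
  have t3 : Real.cos (cd (i+1) (i+1) - m) = Real.cos m := by
    rw [cd_of_le _ _ (le_refl _), sub_self, zero_sub, Real.cos_neg]
  have t2 : -1 ≤ Real.cos (cd (i+1) i - m) := Real.neg_one_le_cos _
  have hrest : ∀ j ∈ Finset.univ \ T, Real.cos m < Real.cos (cd (i+1) j - m) := by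
    intro j hj
    rw [Finset.mem_sdiff, hT] at hj
    simp only [Finset.mem_insert, Finset.mem_singleton] at hj
    push_neg at hj
    obtain ⟨-, hj1, hj2, hj3⟩ := hj
    have hpos : 0 < cd (i+1) j := cd_pos _ _ (Ne.symm hj3)
    have hlt : cd (i+1) j < 2*π - β := by rw [← hδP]; exact hbetween j hj1 hj2 hj3
    have habs : |cd (i+1) j - m| < m := by
      rw [abs_lt]
      constructor <;> linarith [hm]
    calc Real.cos m < Real.cos |cd (i+1) j - m| :=
          Real.cos_lt_cos_of_nonneg_of_le_pi (abs_nonneg _) hmπ.le habs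
      _ = Real.cos (cd (i+1) j - m) := Real.cos_abs _
  have hcardrest : (Finset.univ \ T).card = n - 3 := by
    rw [Finset.card_sdiff_of_subset (Finset.subset_univ T), hTcard, Finset.card_univ, Fintype.card_fin]
  have hne : (Finset.univ \ T).Nonempty := by
    rw [← Finset.card_pos, hcardrest]; omega
  have hsum_rest : (↑(n-3) : ℝ) * Real.cos m
      < ∑ j ∈ Finset.univ \ T, Real.cos (cd (i+1) j - m) := by
    have := Finset.sum_lt_sum_of_nonempty hne hrest
    rwa [Finset.sum_const, hcardrest, nsmul_eq_mul] at this
  have hcast : (↑(n-3):ℝ) = (n:ℝ) - 3 := by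
    have h3 : (3:ℕ) ≤ n := by omega
    push_cast [Nat.cast_sub h3]
    ring
  have hkey : ((n:ℝ) - 1) * Real.cos m < 1 := by
    rw [hsplit, t1, t3] at hsum0
    rw [hcast] at hsum_rest
    have hn' : (4:ℝ) ≤ (n:ℝ) := by exact_mod_cast hn
    linarith [hsum_rest, hsum0, t2, hcast]
  have hcosm : Real.cos m = - Real.cos (β/2) := by rw [hm, Real.cos_pi_sub]
  by_contra hcon
  push_neg at hcon
  set x : ℝ := 1 / ((n:ℝ) - 1) with hx
  have hn1 : (3:ℝ) ≤ (n:ℝ) - 1 := by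
    have : (4:ℝ) ≤ (n:ℝ) := by exact_mod_cast hn
    linarith
  have hx0 : 0 < x := by rw [hx]; exact div_pos one_pos (by linarith)
  have hx1 : x ≤ 1 := by rw [hx, div_le_one (by linarith)]; linarith
  have harc0 : 0 ≤ Real.arcsin x := Real.arcsin_nonneg.mpr hx0.le
  have harc2 : Real.arcsin x ≤ π/2 := Real.arcsin_le_pi_div_two x
  have hle : Real.cos (β/2) ≤ Real.cos (π/2 + Real.arcsin x) :=
    Real.cos_le_cos_of_nonneg_of_le_pi (by linarith) (by linarith) (by linarith)
  have hval : Real.cos (π/2 + Real.arcsin x) = -x := by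
    rw [Real.cos_add, Real.cos_pi_div_two, Real.sin_pi_div_two,
      Real.sin_arcsin (by linarith) hx1]
    ring
  rw [hcosm] at hkey
  rw [hval] at hle
  have hxx : ((n:ℝ)-1) * x = 1 := by rw [hx]; field_simp
  have h5 : ((n:ℝ)-1) * x ≤ ((n:ℝ)-1) * (-Real.cos (β/2)) :=
    mul_le_mul_of_nonneg_left (by linarith) (by linarith)
  linarith [hkey, h5, hxx]

/-- General Combined Angle Lemma: for `n ≥ 3` unit vectors
`v i = (cos (θ i), sin (θ i))` summing to zero, listed in counterclockwise angular order,
the combined angle at each vector equals `240°` if `n = 3`, equals `180°` if `n = 4`,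
and is `< 180° + 2 arcsin (1/(n-1))` if `n ≥ 5`; in particular it is always `≤ 240°`,
strictly so when `n > 3`. -/
theorem general_combined_angle_lemma
    (n : ℕ) [NeZero n] (hn : 3 ≤ n) (θ : Fin n → ℝ)
    (hrange : ∀ i, θ i ∈ Set.Ico 0 (2 * π))
    (hmono : StrictMono θ)
    (hcos : ∑ i, Real.cos (θ i) = 0)
    (hsin : ∑ i, Real.sin (θ i) = 0) :
    ∀ i : Fin n,
      (n = 3 → combinedAngle n θ i = 4 * π / 3) ∧
      (n = 4 → combinedAngle n θ i = π) ∧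
      (5 ≤ n → combinedAngle n θ i < π + 2 * Real.arcsin (1 / ((n : ℝ) - 1))) ∧
      combinedAngle n θ i ≤ 4 * π / 3 ∧
      (3 < n → combinedAngle n θ i < 4 * π / 3) := by
  intro i
  have hπ := Real.pi_pos
  have hfar : 4 ≤ n → combinedAngle n θ i < 4 * π / 3 := by
    intro h4
    have hb := lemmaBound n h4 θ hrange hmono hcos hsin i
    have hn1 : (3:ℝ) ≤ (n:ℝ) - 1 := by
      have : (4:ℝ) ≤ (n:ℝ) := by exact_mod_cast h4
      linarith
    have hhalf : Real.arcsin (1/2) = π/6 := by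
      have := Real.arcsin_sin (x := π/6) (by linarith) (by linarith)
      rwa [Real.sin_pi_div_six] at this
    have hmon : Real.arcsin (1/((n:ℝ)-1)) ≤ Real.arcsin (1/2) := by
      apply Real.monotone_arcsin
      rw [div_le_div_iff₀ (by linarith) (by norm_num)]
      linarith
    linarith
  refine ⟨fun h3 => ?_, fun h4 => ?_, fun h5 => ?_, ?_, fun hgt => ?_⟩
  · subst h3; exact lemma3 θ hrange hmono hcos hsin i
  · subst h4; exact lemma4 θ hrange hmono hcos hsin i
  · exact lemmaBound n (by omega) θ hrange hmono hcos hsin i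
  · by_cases h3 : n = 3
    · subst h3; rw [lemma3 θ hrange hmono hcos hsin i]
    · exact (hfar (by omega)).le
  · exact hfar (by omega)
end

section
/- Let n ≥ 5 and let v₁, ..., vₙ be unit vectors in ℝ² summing to zero. Suppose three of them a, b, c are angularly consecutive (in counterclockwise order a, b, c with no other vᵢ in between) and the counterclockwise angle from a to c (the combined angle of b) is at least 180°. Then n is odd. -/
open Real

private lemma cos_add_cos_nonneg' {u v : ℝ} (hu : 0 ≤ u) (hv : 0 ≤ v) (huv : u + v ≤ π) :
    0 ≤ Real.cos u + Real.cos v := by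
  have h1 : Real.cos (π - u) ≤ Real.cos v :=
    Real.cos_le_cos_of_nonneg_of_le_pi hv (by linarith) (by linarith)
  rw [Real.cos_pi_sub] at h1
  linarith

private lemma norm_step (m : ℕ) (ψ : Fin (m+2) → ℝ) (hm : Monotone ψ)
    (hd : ψ (Fin.last (m+1)) - ψ 0 ≤ π) :
    (∑ j : Fin m, Real.cos (ψ j.castSucc.succ))^2 +
      (∑ j : Fin m, Real.sin (ψ j.castSucc.succ))^2 +
      (2 + 2 * Real.cos (ψ (Fin.last (m+1)) - ψ 0)) ≤
    (∑ j, Real.cos (ψ j))^2 + (∑ j, Real.sin (ψ j))^2 := by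
  have hc : (∑ j, Real.cos (ψ j)) =
      Real.cos (ψ 0) + ((∑ j : Fin m, Real.cos (ψ j.castSucc.succ)) + Real.cos (ψ (Fin.last (m+1)))) := by
    rw [Fin.sum_univ_succ, Fin.sum_univ_castSucc, Fin.succ_last]
  have hs : (∑ j, Real.sin (ψ j)) =
      Real.sin (ψ 0) + ((∑ j : Fin m, Real.sin (ψ j.castSucc.succ)) + Real.sin (ψ (Fin.last (m+1)))) := by
    rw [Fin.sum_univ_succ, Fin.sum_univ_castSucc, Fin.succ_last]
  set x := ψ 0 with hxdef
  set y := ψ (Fin.last (m+1)) with hydef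
  set A := ∑ j : Fin m, Real.cos (ψ j.castSucc.succ) with hA
  set B := ∑ j : Fin m, Real.sin (ψ j.castSucc.succ) with hB
  have key : 0 ≤ A * (Real.cos x + Real.cos y) + B * (Real.sin x + Real.sin y) := by
    have heq : A * (Real.cos x + Real.cos y) + B * (Real.sin x + Real.sin y)
        = ∑ j : Fin m, (Real.cos (ψ j.castSucc.succ - x) + Real.cos (y - ψ j.castSucc.succ)) := by
      rw [hA, hB, Finset.sum_mul, Finset.sum_mul, ← Finset.sum_add_distrib]
      refine Finset.sum_congr rfl fun j _ => ?_
      rw [Real.cos_sub, Real.cos_sub]; ring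
    rw [heq]
    refine Finset.sum_nonneg fun j _ => ?_
    have h1 : x ≤ ψ j.castSucc.succ := hm (Fin.zero_le _)
    have h2 : ψ j.castSucc.succ ≤ y := hm (Fin.le_last _)
    exact cos_add_cos_nonneg' (by linarith) (by linarith) (by linarith)
  rw [hc, hs]
  nlinarith [key, Real.sin_sq_add_cos_sq x, Real.sin_sq_add_cos_sq y, Real.cos_sub y x]

private lemma normsq_ge_one : ∀ (t : ℕ) (ψ : Fin (2*t+1) → ℝ), Monotone ψ →
    ψ (Fin.last (2*t)) - ψ 0 ≤ π →
    1 ≤ (∑ j, Real.cos (ψ j))^2 + (∑ j, Real.sin (ψ j))^2 := by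
  intro t
  induction t with
  | zero =>
    intro ψ _ _
    show (1:ℝ) ≤ (∑ j : Fin 1, Real.cos (ψ j))^2 + (∑ j : Fin 1, Real.sin (ψ j))^2
    rw [Fin.sum_univ_one, Fin.sum_univ_one]
    nlinarith [Real.sin_sq_add_cos_sq (ψ 0)]
  | succ t ih =>
    intro ψ hm hd
    have hmid : Monotone (fun j : Fin (2*t+1) => ψ j.castSucc.succ) := by
      intro a b hab
      exact hm (by simpa [Fin.succ_le_succ_iff, Fin.castSucc_le_castSucc_iff] using hab)
    have hsp : ψ ((Fin.last (2*t)).castSucc.succ) - ψ ((0 : Fin (2*t+1)).castSucc.succ) ≤ π := by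
      have l1 : ψ ((Fin.last (2*t)).castSucc.succ) ≤ ψ (Fin.last (2*(t+1))) := hm (Fin.le_last _)
      have l2 : ψ 0 ≤ ψ ((0 : Fin (2*t+1)).castSucc.succ) := hm (Fin.zero_le _)
      linarith
    have h1 : 1 ≤ (∑ j : Fin (2*t+1), Real.cos (ψ j.castSucc.succ))^2 +
        (∑ j : Fin (2*t+1), Real.sin (ψ j.castSucc.succ))^2 :=
      ih (fun j => ψ j.castSucc.succ) hmid hsp
    have h2 : (∑ j : Fin (2*t+1), Real.cos (ψ j.castSucc.succ))^2 +
        (∑ j : Fin (2*t+1), Real.sin (ψ j.castSucc.succ))^2 +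
        (2 + 2 * Real.cos (ψ (Fin.last (2*t+1+1)) - ψ 0)) ≤
        (∑ j, Real.cos (ψ j))^2 + (∑ j, Real.sin (ψ j))^2 :=
      norm_step (2*t+1) ψ hm hd
    have h3 : (-1:ℝ) ≤ Real.cos (ψ (Fin.last (2*t+1+1)) - ψ 0) := Real.neg_one_le_cos _
    linarith

private lemma normsq_gt_one (s : ℕ) (ψ : Fin (2*s+5) → ℝ) (hsm : StrictMono ψ)
    (hd : ψ (Fin.last (2*s+4)) - ψ 0 ≤ π) :
    1 < (∑ j, Real.cos (ψ j))^2 + (∑ j, Real.sin (ψ j))^2 := by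
  have hm : Monotone ψ := hsm.monotone
  have hmid : Monotone (fun j : Fin (2*s+3) => ψ j.castSucc.succ) := by
    intro a b hab
    exact hm (by simpa [Fin.succ_le_succ_iff, Fin.castSucc_le_castSucc_iff] using hab)
  have h0 : 0 ≤ ψ (Fin.last (2*s+4)) - ψ 0 := by
    have := hm (Fin.zero_le (Fin.last (2*s+4))); linarith
  have hstep : (∑ j : Fin (2*s+3), Real.cos (ψ j.castSucc.succ))^2 +
      (∑ j : Fin (2*s+3), Real.sin (ψ j.castSucc.succ))^2 +
      (2 + 2 * Real.cos (ψ (Fin.last (2*s+4)) - ψ 0)) ≤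
      (∑ j, Real.cos (ψ j))^2 + (∑ j, Real.sin (ψ j))^2 :=
    norm_step (2*s+3) ψ hm hd
  by_cases hlt : ψ (Fin.last (2*s+4)) - ψ 0 < π
  · have h1 : 1 ≤ (∑ j : Fin (2*s+3), Real.cos (ψ j.castSucc.succ))^2 +
        (∑ j : Fin (2*s+3), Real.sin (ψ j.castSucc.succ))^2 := by
      refine normsq_ge_one (s+1) (fun j => ψ j.castSucc.succ) hmid ?_
      have l1 : ψ ((Fin.last (2*s+2)).castSucc.succ) ≤ ψ (Fin.last (2*s+4)) := hm (Fin.le_last _)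
      have l2 : ψ 0 ≤ ψ ((0 : Fin (2*s+3)).castSucc.succ) := hm (Fin.zero_le _)
      show ψ ((Fin.last (2*s+2)).castSucc.succ) - ψ ((0 : Fin (2*s+3)).castSucc.succ) ≤ π
      linarith
    have h2 : Real.cos π < Real.cos (ψ (Fin.last (2*s+4)) - ψ 0) :=
      Real.strictAntiOn_cos ⟨h0, hlt.le⟩ ⟨Real.pi_pos.le, le_refl _⟩ hlt
    rw [Real.cos_pi] at h2
    linarith
  · have hpi : ψ (Fin.last (2*s+4)) - ψ 0 = π := le_antisymm hd (not_lt.mp hlt)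
    have hub : ψ ((Fin.last (2*s+2)).castSucc.succ) < ψ (Fin.last (2*s+4)) := by
      apply hsm
      rw [Fin.lt_def]
      simp [Fin.val_succ]
    have hlb : ψ 0 < ψ ((0 : Fin (2*s+3)).castSucc.succ) := by
      apply hsm
      exact Fin.succ_pos _
    have hmidd : ψ ((Fin.last (2*s+2)).castSucc.succ) - ψ ((0 : Fin (2*s+3)).castSucc.succ) < π := by
      linarith
    have hmidd0 : 0 ≤ ψ ((Fin.last (2*s+2)).castSucc.succ) - ψ ((0 : Fin (2*s+3)).castSucc.succ) := by
      have := hm (show ((0 : Fin (2*s+3)).castSucc.succ : Fin (2*s+5)) ≤ (Fin.last (2*s+2)).castSucc.succ from by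
        rw [Fin.le_def]; simp)
      linarith
    have hstep2 : (∑ j : Fin (2*s+1), Real.cos (ψ j.castSucc.succ.castSucc.succ))^2 +
        (∑ j : Fin (2*s+1), Real.sin (ψ j.castSucc.succ.castSucc.succ))^2 +
        (2 + 2 * Real.cos (ψ ((Fin.last (2*s+2)).castSucc.succ) - ψ ((0 : Fin (2*s+3)).castSucc.succ))) ≤
        (∑ j : Fin (2*s+3), Real.cos (ψ j.castSucc.succ))^2 +
        (∑ j : Fin (2*s+3), Real.sin (ψ j.castSucc.succ))^2 :=
      norm_step (2*s+1) (fun j => ψ j.castSucc.succ) hmid (by show ψ _ - ψ _ ≤ π; linarith)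
    have hinner : 1 ≤ (∑ j : Fin (2*s+1), Real.cos (ψ j.castSucc.succ.castSucc.succ))^2 +
        (∑ j : Fin (2*s+1), Real.sin (ψ j.castSucc.succ.castSucc.succ))^2 := by
      refine normsq_ge_one s (fun j => ψ j.castSucc.succ.castSucc.succ)
        (fun a b hab => hm ?_) ?_
      · simp only [Fin.succ_le_succ_iff, Fin.castSucc_le_castSucc_iff]
        simpa [Fin.succ_le_succ_iff, Fin.castSucc_le_castSucc_iff] using hab
      · show ψ ((Fin.last (2*s)).castSucc.succ.castSucc.succ) -
            ψ ((0 : Fin (2*s+1)).castSucc.succ.castSucc.succ) ≤ π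
        have l1 : ψ ((Fin.last (2*s)).castSucc.succ.castSucc.succ) ≤ ψ (Fin.last (2*s+4)) :=
          hm (Fin.le_last _)
        have l2 : ψ 0 ≤ ψ ((0 : Fin (2*s+1)).castSucc.succ.castSucc.succ) := hm (Fin.zero_le _)
        linarith
    have h2 : Real.cos π < Real.cos (ψ ((Fin.last (2*s+2)).castSucc.succ) - ψ ((0 : Fin (2*s+3)).castSucc.succ)) :=
      Real.strictAntiOn_cos ⟨hmidd0, hmidd.le⟩ ⟨Real.pi_pos.le, le_refl _⟩ hmidd
    rw [Real.cos_pi] at h2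
    rw [hpi, Real.cos_pi] at hstep
    linarith

/-- let `n ≥ 5` unit vectors `v i = (cos (θ i), sin (θ i))` sum to zero,
listed in counterclockwise angular order.  If for some `i` the three angularly
consecutive vectors `a = v (i-1)`, `b = v i`, `c = v (i+1)` have combined angle of `b`
(the counterclockwise angle from `a` to `c`, namely the sum of the two gaps) at least
`180°`, then `n` is odd. -/
theorem special_combined_angle_parity
    (n : ℕ) [NeZero n] (hn : 5 ≤ n) (θ : Fin n → ℝ)
    (hrange : ∀ i, θ i ∈ Set.Ico 0 (2 * π))
    (hmono : StrictMono θ)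
    (hcos : ∑ i, Real.cos (θ i) = 0)
    (hsin : ∑ i, Real.sin (θ i) = 0)
    (i : Fin n)
    (hcomb : π ≤ angGap n θ (i - 1) + angGap n θ i) :
    Odd n := by
  rcases Nat.even_or_odd n with hev | hodd
  swap
  · exact hodd
  exfalso
  obtain ⟨s, rfl⟩ : ∃ s, n = 2*s+6 := by
    rcases hev with ⟨u, hu⟩; exact ⟨u - 3, by omega⟩
  have hval : ∀ c : Fin (2*s+6), ((i + 1 + c : Fin (2*s+6)) : ℕ) = ((i:ℕ) + 1 + (c:ℕ)) % (2*s+6) := by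
    intro c
    simp [Fin.add_def, Nat.mod_add_mod]
  set ψ : Fin (2*s+5) → ℝ := fun j =>
    θ (i + 1 + Fin.castSucc j) + (if (i:ℕ) + 1 + (j:ℕ) < 2*s+6 then 0 else 2*π) with hψ
  have hvj : ∀ j : Fin (2*s+5),
      ((i + 1 + Fin.castSucc j : Fin (2*s+6)) : ℕ) = ((i:ℕ) + 1 + (j:ℕ)) % (2*s+6) := by
    intro j; rw [hval]; simp
  have hiin := i.isLt
  -- strict monotonicity of the lifted angles
  have hsm : StrictMono ψ := by
    intro j j' hjj'
    have hj := hvj j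
    have hj' := hvj j'
    have hjlt : (j:ℕ) < (j':ℕ) := hjj'
    have hji := j.isLt
    have hji' := j'.isLt
    simp only [hψ]
    by_cases c1 : (i:ℕ) + 1 + (j:ℕ) < 2*s+6 <;> by_cases c2 : (i:ℕ) + 1 + (j':ℕ) < 2*s+6
    · rw [if_pos c1, if_pos c2, add_zero, add_zero]
      apply hmono
      rw [Fin.lt_def, hj, hj', Nat.mod_eq_of_lt c1, Nat.mod_eq_of_lt c2]
      omega
    · rw [if_pos c1, if_neg c2, add_zero]
      have r1 := (hrange (i + 1 + Fin.castSucc j)).2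
      have r2 := (hrange (i + 1 + Fin.castSucc j')).1
      linarith
    · omega
    · rw [if_neg c1, if_neg c2]
      have e1 : ((i:ℕ)+1+(j:ℕ)) % (2*s+6) = (i:ℕ)+1+(j:ℕ) - (2*s+6) := by
        rw [Nat.mod_eq_sub_mod (by omega), Nat.mod_eq_of_lt (by omega)]
      have e2 : ((i:ℕ)+1+(j':ℕ)) % (2*s+6) = (i:ℕ)+1+(j':ℕ) - (2*s+6) := by
        rw [Nat.mod_eq_sub_mod (by omega), Nat.mod_eq_of_lt (by omega)]
      have : θ (i + 1 + Fin.castSucc j) < θ (i + 1 + Fin.castSucc j') := by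
        apply hmono
        rw [Fin.lt_def, hj, hj', e1, e2]
        omega
      linarith
  -- first lifted angle
  have hψ0 : ψ 0 = θ i + angGap (2*s+6) θ i := by
    simp only [hψ, Fin.castSucc_zero, add_zero, Fin.val_zero, Nat.add_zero, angGap]
    split_ifs with h <;> ring
  -- last lifted angle
  have hidx : (i + 1 + Fin.castSucc (Fin.last (2*s+4)) : Fin (2*s+6)) = i - 1 := by
    apply Fin.ext
    rw [hval, Fin.sub_def]
    simp only [Fin.val_one, Fin.val_last, Fin.coe_castSucc]
    congr 1
    omega
  have hsub : ((i - 1 : Fin (2*s+6)) : ℕ) = if (i:ℕ) = 0 then 2*s+5 else (i:ℕ) - 1 := by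
    rw [Fin.sub_def]
    simp only [Fin.val_one]
    split_ifs with h
    · rw [h]
      have e : 2*s+6-1+0 = 2*s+5 := by omega
      rw [e, Nat.mod_eq_of_lt (by omega)]
    · have e : 2*s+6-1+(i:ℕ) = ((i:ℕ) - 1) + (2*s+6) := by omega
      rw [e, Nat.add_mod_right, Nat.mod_eq_of_lt (by omega)]
  have hplus : (i - 1 + 1 : Fin (2*s+6)) = i := by
    exact sub_add_cancel i 1
  have hψlast : ψ (Fin.last (2*s+4)) = θ i + 2*π - angGap (2*s+6) θ (i - 1) := by
    simp only [hψ, hidx, Fin.val_last, angGap, hplus, hsub]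
    by_cases h0 : (i:ℕ) = 0
    · rw [if_pos (by omega), if_pos h0, if_neg (by omega)]
      ring
    · rw [if_neg (by omega), if_neg h0, if_pos (by have := i.isLt; omega)]
      ring
  -- spread at most π
  have hspread : ψ (Fin.last (2*s+4)) - ψ 0 ≤ π := by
    rw [hψ0, hψlast]
    linarith
  -- the sums of cosines and sines
  have hlasteq : (i + 1 + Fin.last (2*s+5) : Fin (2*s+6)) = i := by
    apply Fin.ext
    rw [hval]
    simp only [Fin.val_last]
    have e : (i:ℕ)+1+(2*s+5) = (i:ℕ) + (2*s+6) := by omega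
    rw [e, Nat.add_mod_right, Nat.mod_eq_of_lt i.isLt]
  have hCsum : ∑ j : Fin (2*s+5), Real.cos (ψ j) = - Real.cos (θ i) := by
    have hsum1 : ∑ j : Fin (2*s+5+1), Real.cos (θ (i + 1 + j)) = 0 := by
      rw [Fintype.sum_equiv (Equiv.addLeft (i+1 : Fin (2*s+6)))
        (fun j => Real.cos (θ (i + 1 + j))) (fun k => Real.cos (θ k)) (fun j => by simp [add_assoc])]
      exact hcos
    rw [Fin.sum_univ_castSucc, hlasteq] at hsum1
    have hcpsi : ∀ j : Fin (2*s+5), Real.cos (ψ j) = Real.cos (θ (i + 1 + Fin.castSucc j)) := by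
      intro j
      simp only [hψ]
      split_ifs <;> simp [Real.cos_add_two_pi]
    simp only [hcpsi]
    linarith
  have hSsum : ∑ j : Fin (2*s+5), Real.sin (ψ j) = - Real.sin (θ i) := by
    have hsum1 : ∑ j : Fin (2*s+5+1), Real.sin (θ (i + 1 + j)) = 0 := by
      rw [Fintype.sum_equiv (Equiv.addLeft (i+1 : Fin (2*s+6)))
        (fun j => Real.sin (θ (i + 1 + j))) (fun k => Real.sin (θ k)) (fun j => by simp [add_assoc])]
      exact hsin
    rw [Fin.sum_univ_castSucc, hlasteq] at hsum1
    have hspsi : ∀ j : Fin (2*s+5), Real.sin (ψ j) = Real.sin (θ (i + 1 + Fin.castSucc j)) := by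
      intro j
      simp only [hψ]
      split_ifs <;> simp [Real.sin_add_two_pi]
    simp only [hspsi]
    linarith
  -- contradiction
  have hgt := normsq_gt_one s ψ hsm hspread
  rw [hCsum, hSsum] at hgt
  nlinarith [Real.sin_sq_add_cos_sq (θ i)]
end

section
/- Let n ≥ 5 and let v₁, ..., vₙ be unit vectors in ℝ² summing to zero, with three angularly consecutive vectors a, b, c (counterclockwise order a, b, c, no other vector in between). Let α be the angle from a to b and γ the angle from b to c. If α + γ ≥ 180°, then 60° < α < 120° and 60° < γ < 120°. -/
/-!
Rotate so that `b` points along angle `0`. The other `n - 1` vectors then lie on the arc from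
`c` (angle `γ`) to `a` (angle `2π - α`), of length at most `π` since `α + γ ≥ π`, and they sum to
`(-1, 0)`. Measured from `c`, their abscissas `tⱼ = cos (ξⱼ - γ)` sum to `-cos γ` and their
heights `√(1 - tⱼ²)` sum to `sin γ`. By concavity of `t ↦ √(1 - t²)`, two points of the upper
semicircle can be traded for an endpoint `(±1, 0)` and one further point, keeping `∑ tⱼ` modulo `ℤ`
and not increasing the total height, strictly so if neither point was an endpoint. Merging all
points this way, with the two vectors strictly inside the arc that `n ≥ 5` provides, gives
`∑ √(1 - tⱼ²) > √(1 - r²)` with `|r| ≤ 1` and `r ≡ ∑ tⱼ`. If `γ ≥ 2π/3` then `∑ tⱼ ≥ 1/2`, which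
forces `r² ≤ (∑ tⱼ)²`, hence `sin γ > |sin γ|`. Reflecting the picture gives `α < 2π/3`, and the
lower bounds follow from `α + γ ≥ π`.
-/

open Real Finset

/-- After squaring this is `-(1 - x) * (1 - y) ≤ √(1 - x ^ 2) * √(1 - y ^ 2)`. -/
lemma sqrt_one_sub_sq_add_sub_one_le {x y : ℝ} (hx : |x| ≤ 1) (hy : |y| ≤ 1) :
    √(1 - (x + y - 1) ^ 2) ≤ √(1 - x ^ 2) + √(1 - y ^ 2) := by
  have hx2 : 0 ≤ 1 - x ^ 2 := by nlinarith [sq_abs x, abs_nonneg x]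
  have hy2 : 0 ≤ 1 - y ^ 2 := by nlinarith [sq_abs y, abs_nonneg y]
  rw [sqrt_le_left (by positivity)]
  nlinarith [sq_sqrt hx2, sq_sqrt hy2,
    mul_nonneg (sqrt_nonneg (1 - x ^ 2)) (sqrt_nonneg (1 - y ^ 2)),
    mul_nonneg (sub_nonneg.2 (abs_le.1 hx).2) (sub_nonneg.2 (abs_le.1 hy).2)]

lemma sqrt_one_sub_sq_add_sub_one_lt {x y : ℝ} (hx : |x| < 1) (hy : |y| < 1) :
    √(1 - (x + y - 1) ^ 2) < √(1 - x ^ 2) + √(1 - y ^ 2) := by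
  have hx2 : 0 < 1 - x ^ 2 := by nlinarith [sq_abs x, abs_nonneg x]
  have hy2 : 0 < 1 - y ^ 2 := by nlinarith [sq_abs y, abs_nonneg y]
  rw [sqrt_lt' (by positivity)]
  nlinarith [sq_sqrt hx2.le, sq_sqrt hy2.le,
    mul_nonneg (sqrt_nonneg (1 - x ^ 2)) (sqrt_nonneg (1 - y ^ 2)),
    mul_pos (sub_pos.2 (abs_lt.1 hx).2) (sub_pos.2 (abs_lt.1 hy).2)]

lemma exists_sqrt_one_sub_sq_le_add {x y : ℝ} (hx : |x| ≤ 1) (hy : |y| ≤ 1) :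
    ∃ r : ℝ, |r| ≤ 1 ∧ ∃ k : ℤ, x + y = r + k ∧
      √(1 - r ^ 2) ≤ √(1 - x ^ 2) + √(1 - y ^ 2) ∧
      (|x| < 1 → |y| < 1 → √(1 - r ^ 2) < √(1 - x ^ 2) + √(1 - y ^ 2)) := by
  wlog hxy : 0 ≤ x + y generalizing x y
  · obtain ⟨r, hr, k, hsum, hle, hlt⟩ :=
      this (x := -x) (y := -y) (by rwa [abs_neg]) (by rwa [abs_neg]) (by linarith)
    simp only [neg_sq, abs_neg] at hle hlt
    exact ⟨-r, by rwa [abs_neg], -k, by push_cast; linarith, by rwa [neg_sq], by rwa [neg_sq]⟩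
  refine ⟨x + y - 1, abs_le.2 ⟨by linarith, by linarith [(abs_le.1 hx).2, (abs_le.1 hy).2]⟩,
    1, by push_cast; ring, sqrt_one_sub_sq_add_sub_one_le hx hy,
    sqrt_one_sub_sq_add_sub_one_lt⟩

lemma exists_sqrt_one_sub_sq_le_add_sum {ι : Type*} [DecidableEq ι] (s : Finset ι) {t : ι → ℝ}
    (ht : ∀ j ∈ s, |t j| ≤ 1) {x : ℝ} (hx : |x| ≤ 1) :
    ∃ r : ℝ, |r| ≤ 1 ∧ ∃ k : ℤ, x + ∑ j ∈ s, t j = r + k ∧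
      √(1 - r ^ 2) ≤ √(1 - x ^ 2) + ∑ j ∈ s, √(1 - t j ^ 2) := by
  induction s using Finset.induction_on generalizing x with
  | empty => exact ⟨x, hx, 0, by simp, by simp⟩
  | insert a s ha ih =>
    obtain ⟨r₀, hr₀, k₀, hsum₀, hle₀, -⟩ :=
      exists_sqrt_one_sub_sq_le_add hx (ht a (mem_insert_self a s))
    obtain ⟨r, hr, k, hsum, hle⟩ := ih (fun j hj => ht j (mem_insert_of_mem hj)) hr₀
    refine ⟨r, hr, k + k₀, ?_, ?_⟩
    · rw [sum_insert ha]; push_cast; linarith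
    · rw [sum_insert ha]; linarith

lemma sq_le_sq_of_eq_add_int {r s : ℝ} (hs : 1 / 2 ≤ s) (hr : |r| ≤ 1) {k : ℤ} (hk : s = r + k) :
    r ^ 2 ≤ s ^ 2 := by
  obtain ⟨hr₁, hr₂⟩ := abs_le.1 hr
  obtain hk1 | rfl | rfl | hk2 : k ≤ -1 ∨ k = 0 ∨ k = 1 ∨ 2 ≤ k := by omega
  · have : (k : ℝ) ≤ -1 := by exact_mod_cast hk1
    linarith
  all_goals push_cast at hk
  · rw [hk, add_zero]
  · exact sq_le_sq' (by linarith) (by linarith)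
  · have : (2 : ℝ) ≤ k := by exact_mod_cast hk2
    exact sq_le_sq' (by linarith) (by linarith)

theorem sqrt_one_sub_sq_sum_lt_sum_sqrt {ι : Type*} [DecidableEq ι] {s : Finset ι} {t : ι → ℝ}
    (ht : ∀ j ∈ s, |t j| ≤ 1) {j₁ j₂ : ι} (h₁ : j₁ ∈ s) (h₂ : j₂ ∈ s) (hne : j₁ ≠ j₂)
    (ht₁ : |t j₁| < 1) (ht₂ : |t j₂| < 1) (hsum : 1 / 2 ≤ ∑ j ∈ s, t j) :
    √(1 - (∑ j ∈ s, t j) ^ 2) < ∑ j ∈ s, √(1 - t j ^ 2) := by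
  set s' := (s.erase j₁).erase j₂
  have h₂' : j₂ ∈ s.erase j₁ := mem_erase.2 ⟨hne.symm, h₂⟩
  have split (g : ι → ℝ) : ∑ j ∈ s, g j = g j₁ + g j₂ + ∑ j ∈ s', g j := by
    rw [add_assoc, add_sum_erase _ _ h₂', add_sum_erase _ _ h₁]
  obtain ⟨r₀, hr₀, k₀, hsum₀, -, hlt₀⟩ := exists_sqrt_one_sub_sq_le_add ht₁.le ht₂.le
  obtain ⟨r, hr, k, hsum', hle⟩ :=
    exists_sqrt_one_sub_sq_le_add_sum s'
      (fun j hj => ht j (mem_of_mem_erase (mem_of_mem_erase hj))) hr₀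
  have hk : ∑ j ∈ s, t j = r + (k + k₀ : ℤ) := by rw [split]; push_cast; linarith
  calc √(1 - (∑ j ∈ s, t j) ^ 2)
      ≤ √(1 - r ^ 2) := sqrt_le_sqrt (by linarith [sq_le_sq_of_eq_add_int hsum hr hk])
    _ < ∑ j ∈ s, √(1 - t j ^ 2) := by rw [split]; linarith [hlt₀ ht₁ ht₂]

lemma sum_cos_sub {ι : Type*} (s : Finset ι) (ξ : ι → ℝ) (φ : ℝ) :
    ∑ j ∈ s, cos (ξ j - φ) = (∑ j ∈ s, cos (ξ j)) * cos φ + (∑ j ∈ s, sin (ξ j)) * sin φ := by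
  simp only [cos_sub, sum_add_distrib, sum_mul]

lemma sum_sin_sub {ι : Type*} (s : Finset ι) (ξ : ι → ℝ) (φ : ℝ) :
    ∑ j ∈ s, sin (ξ j - φ) = (∑ j ∈ s, sin (ξ j)) * cos φ - (∑ j ∈ s, cos (ξ j)) * sin φ := by
  simp only [sin_sub, sum_sub_distrib, sum_mul]

lemma cos_two_pi_div_three : cos (2 * π / 3) = -1 / 2 := by
  rw [show 2 * π / 3 = π - π / 3 by ring, cos_pi_sub, cos_pi_div_three]; norm_num

theorem half_plane_start_lt_two_pi_div_three {ι : Type*} [DecidableEq ι] {s : Finset ι}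
    {ξ : ι → ℝ} {γ δ : ℝ} (hδ : δ < 2 * π) (hδγ : δ ≤ γ + π)
    (hcos : ∑ j ∈ s, cos (ξ j) = -1) (hsin : ∑ j ∈ s, sin (ξ j) = 0)
    (hmem : ∀ j ∈ s, ξ j ∈ Set.Icc γ δ) {j₁ j₂ : ι} (h₁ : j₁ ∈ s) (h₂ : j₂ ∈ s)
    (hne : j₁ ≠ j₂) (hξ₁ : ξ j₁ ∈ Set.Ioo γ δ) (hξ₂ : ξ j₂ ∈ Set.Ioo γ δ) :
    γ < 2 * π / 3 := by
  by_contra! hγ'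
  set t : ι → ℝ := fun j => cos (ξ j - γ)
  have ht : ∀ j ∈ s, |t j| ≤ 1 := fun j _ => abs_cos_le_one _
  have ht_lt : ∀ j, ξ j ∈ Set.Ioo γ δ → |t j| < 1 := fun j hj => by
    have := sin_pos_of_pos_of_lt_pi (sub_pos.2 hj.1) (by linarith [hj.2])
    rw [← sq_lt_one_iff_abs_lt_one]
    nlinarith [sin_sq_add_cos_sq (ξ j - γ)]
  have hsum_t : ∑ j ∈ s, t j = -cos γ := by simp only [t, sum_cos_sub, hcos, hsin]; ring
  have hsum_height : ∑ j ∈ s, √(1 - t j ^ 2) = sin γ := by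
    rw [← sum_congr rfl fun j hj => sin_eq_sqrt_one_sub_cos_sq (sub_nonneg.2 (hmem j hj).1)
      (by linarith [(hmem j hj).2]), sum_sin_sub, hcos, hsin]
    ring
  have hγπ : γ < π := by
    have hpos : 0 < sin γ := hsum_height ▸ sum_pos' (fun j _ => sqrt_nonneg _)
      ⟨j₁, h₁, sqrt_pos.2 (by nlinarith [(sq_lt_one_iff_abs_lt_one _).2 (ht_lt j₁ hξ₁)])⟩
    by_contra! hπ
    have := sin_nonpos_of_nonpos_of_neg_pi_le (x := γ - 2 * π)
      (by linarith [hξ₁.1, hξ₁.2]) (by linarith)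
    rw [sin_sub_two_pi] at this
    linarith
  have hcosγ : cos γ ≤ -1 / 2 :=
    cos_two_pi_div_three ▸ cos_le_cos_of_nonneg_of_le_pi (by positivity) hγπ.le hγ'
  have := sqrt_one_sub_sq_sum_lt_sum_sqrt ht h₁ h₂ hne (ht_lt j₁ hξ₁) (ht_lt j₂ hξ₂) (by linarith)
  rw [hsum_t, hsum_height, neg_sq, ← abs_sin_eq_sqrt_one_sub_cos_sq] at this
  exact (le_abs_self _).not_gt this

theorem arc_ends_lt_two_pi_div_three {ι : Type*} [DecidableEq ι] {s : Finset ι}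
    {ξ : ι → ℝ} {γ δ : ℝ} (hγ : 0 < γ) (hδ : δ < 2 * π) (hδγ : δ ≤ γ + π)
    (hcos : ∑ j ∈ s, cos (ξ j) = -1) (hsin : ∑ j ∈ s, sin (ξ j) = 0)
    (hmem : ∀ j ∈ s, ξ j ∈ Set.Icc γ δ) {j₁ j₂ : ι} (h₁ : j₁ ∈ s) (h₂ : j₂ ∈ s)
    (hne : j₁ ≠ j₂) (hξ₁ : ξ j₁ ∈ Set.Ioo γ δ) (hξ₂ : ξ j₂ ∈ Set.Ioo γ δ) :
    γ < 2 * π / 3 ∧ 2 * π - δ < 2 * π / 3 := by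
  refine ⟨half_plane_start_lt_two_pi_div_three hδ hδγ hcos hsin hmem h₁ h₂ hne hξ₁ hξ₂,
    half_plane_start_lt_two_pi_div_three (ξ := fun j => 2 * π - ξ j) (δ := 2 * π - γ)
      (by linarith) (by linarith) ?_ ?_ (fun j hj => ?_) h₁ h₂ hne ?_ ?_⟩
  · simpa only [cos_two_pi_sub] using hcos
  · simp only [sin_two_pi_sub, sum_neg_distrib, hsin, neg_zero]
  · exact ⟨by linarith [(hmem j hj).2], by linarith [(hmem j hj).1]⟩
  · exact ⟨by linarith [hξ₁.2], by linarith [hξ₁.1]⟩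
  · exact ⟨by linarith [hξ₂.2], by linarith [hξ₂.1]⟩

lemma Fin.val_neg_one {n : ℕ} [NeZero n] : ((-1 : Fin n) : ℕ) = n - 1 := by
  obtain ⟨m, rfl⟩ := Nat.exists_eq_add_one_of_ne_zero (NeZero.ne n)
  exact Fin.coe_neg_one

section Rotation

variable {n : ℕ} {θ : Fin n → ℝ}

noncomputable def rotAngle (θ : Fin n → ℝ) (i k : Fin n) : ℝ :=
  θ (i + k) - θ i + if n ≤ (i : ℕ) + k then 2 * π else 0

lemma rotAngle_zero [NeZero n] (i : Fin n) : rotAngle θ i 0 = 0 := by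
  simp [rotAngle, i.isLt]

lemma rotAngle_strictMono (hmono : StrictMono θ) (hrange : ∀ j, θ j ∈ Set.Ico 0 (2 * π))
    (i : Fin n) : StrictMono (rotAngle θ i) := by
  intro k l hkl
  have hk := Fin.val_add_eq_ite i k
  have hl := Fin.val_add_eq_ite i l
  rw [Fin.lt_def] at hkl
  simp only [rotAngle]
  split_ifs at hk hl ⊢
  · linarith [hmono (show i + k < i + l from Fin.lt_def.2 (by omega))]
  · omega
  · linarith [(hrange (i + k)).2, (hrange (i + l)).1]
  · linarith [hmono (show i + k < i + l from Fin.lt_def.2 (by omega))]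

lemma rotAngle_one [NeZero n] (hn : 2 ≤ n) (i : Fin n) : rotAngle θ i 1 = angGap n θ i := by
  have h1 : ((1 : Fin n) : ℕ) = 1 := by rw [Fin.val_one', Nat.mod_eq_of_lt hn]
  unfold rotAngle angGap
  split_ifs <;> first | omega | ring

lemma rotAngle_neg_one [NeZero n] (i : Fin n) :
    rotAngle θ i (-1) = 2 * π - angGap n θ (i - 1) := by
  have hsub := Fin.val_add_eq_ite i (-1)
  rw [← sub_eq_add_neg, Fin.val_neg_one] at hsub
  unfold rotAngle angGap
  rw [← sub_eq_add_neg, sub_add_cancel, Fin.val_neg_one]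
  split_ifs at hsub ⊢ <;> first | omega | ring

lemma rotAngle_mem_Icc [NeZero n] (hmono : StrictMono θ) (hrange : ∀ j, θ j ∈ Set.Ico 0 (2 * π))
    (i : Fin n) {k : Fin n} (hk : k ≠ 0) :
    rotAngle θ i k ∈ Set.Icc (rotAngle θ i 1) (rotAngle θ i (-1)) :=
  ⟨(rotAngle_strictMono hmono hrange i).monotone (Fin.one_le_of_ne_zero hk),
    (rotAngle_strictMono hmono hrange i).monotone (Fin.le_def.2 (by rw [Fin.val_neg_one]; omega))⟩

lemma rotAngle_mem_Ioo [NeZero n] (hmono : StrictMono θ) (hrange : ∀ j, θ j ∈ Set.Ico 0 (2 * π))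
    (i : Fin n) {k : Fin n} (hk₁ : 1 < (k : ℕ)) (hk₂ : (k : ℕ) < n - 1) :
    rotAngle θ i k ∈ Set.Ioo (rotAngle θ i 1) (rotAngle θ i (-1)) :=
  ⟨rotAngle_strictMono hmono hrange i
      (Fin.lt_def.2 (by rw [Fin.val_one', Nat.mod_eq_of_lt (by omega)]; omega)),
    rotAngle_strictMono hmono hrange i (Fin.lt_def.2 (by rw [Fin.val_neg_one]; omega))⟩

lemma angGap_pos [NeZero n] (hn : 2 ≤ n) (hmono : StrictMono θ)
    (hrange : ∀ j, θ j ∈ Set.Ico 0 (2 * π)) (i : Fin n) : 0 < angGap n θ i := by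
  rw [← rotAngle_one hn, ← rotAngle_zero (θ := θ) i]
  exact rotAngle_strictMono hmono hrange i
    (Fin.lt_def.2 (by rw [Fin.val_one', Nat.mod_eq_of_lt hn, Fin.val_zero]; omega))

lemma cos_rotAngle (i k : Fin n) : cos (rotAngle θ i k) = cos (θ (i + k) - θ i) := by
  unfold rotAngle; split_ifs <;> simp

lemma sin_rotAngle (i k : Fin n) : sin (rotAngle θ i k) = sin (θ (i + k) - θ i) := by
  unfold rotAngle; split_ifs <;> simp

lemma sum_erase_zero_cos_rotAngle [NeZero n] (hcos : ∑ j, cos (θ j) = 0)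
    (hsin : ∑ j, sin (θ j) = 0) (i : Fin n) : ∑ k ∈ univ.erase 0, cos (rotAngle θ i k) = -1 := by
  rw [← add_right_inj (cos (rotAngle θ i 0)),
    add_sum_erase univ (fun k => cos (rotAngle θ i k)) (mem_univ 0),
    rotAngle_zero, cos_zero]
  simp only [cos_rotAngle]
  rw [Fintype.sum_equiv (Equiv.addLeft i) (fun k => cos (θ (i + k) - θ i))
    (fun j => cos (θ j - θ i)) fun _ => rfl, sum_cos_sub, hcos, hsin]
  ring

lemma sum_erase_zero_sin_rotAngle [NeZero n] (hcos : ∑ j, cos (θ j) = 0)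
    (hsin : ∑ j, sin (θ j) = 0) (i : Fin n) : ∑ k ∈ univ.erase 0, sin (rotAngle θ i k) = 0 := by
  rw [← add_right_inj (sin (rotAngle θ i 0)),
    add_sum_erase univ (fun k => sin (rotAngle θ i k)) (mem_univ 0),
    rotAngle_zero, sin_zero]
  simp only [sin_rotAngle]
  rw [Fintype.sum_equiv (Equiv.addLeft i) (fun k => sin (θ (i + k) - θ i))
    (fun j => sin (θ j - θ i)) fun _ => rfl, sum_sin_sub, hcos, hsin]
  ring

end Rotation

/-- Special Combined Angle Lemma, quantitative part: let `n ≥ 5` unit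
vectors `v i = (cos (θ i), sin (θ i))` sum to zero, listed in counterclockwise angular
order.  Fix `i` and consider the angularly consecutive triple `a = v (i-1)`, `b = v i`,
`c = v (i+1)`; let `α = angGap (i-1)` be the angle from `a` to `b` and `γ = angGap i`
the angle from `b` to `c`.  If `α + γ ≥ 180°` then `60° < α < 120°` and
`60° < γ < 120°`. -/
theorem special_combined_angle_bounds
    (n : ℕ) [NeZero n] (hn : 5 ≤ n) (θ : Fin n → ℝ)
    (hrange : ∀ i, θ i ∈ Set.Ico 0 (2 * π))
    (hmono : StrictMono θ)
    (hcos : ∑ i, Real.cos (θ i) = 0)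
    (hsin : ∑ i, Real.sin (θ i) = 0)
    (i : Fin n)
    (hcomb : π ≤ angGap n θ (i - 1) + angGap n θ i) :
    π / 3 < angGap n θ (i - 1) ∧ angGap n θ (i - 1) < 2 * π / 3 ∧
    π / 3 < angGap n θ i ∧ angGap n θ i < 2 * π / 3 := by
  have h2 : ((2 : Fin n) : ℕ) = 2 := by rw [Fin.coe_ofNat_eq_mod, Nat.mod_eq_of_lt (by omega)]
  have h3 : ((3 : Fin n) : ℕ) = 3 := by rw [Fin.coe_ofNat_eq_mod, Nat.mod_eq_of_lt (by omega)]
  have hγ := rotAngle_one (θ := θ) (by omega) i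
  have hα := rotAngle_neg_one (θ := θ) i
  have hγ_pos := angGap_pos (by omega) hmono hrange i
  have hα_pos := angGap_pos (by omega) hmono hrange (i - 1)
  obtain ⟨hγ_lt, hα_lt⟩ := arc_ends_lt_two_pi_div_three (s := univ.erase 0) (j₁ := 2) (j₂ := 3)
    (by linarith) (by linarith) (by linarith) (sum_erase_zero_cos_rotAngle hcos hsin i)
    (sum_erase_zero_sin_rotAngle hcos hsin i)
    (fun k hk => rotAngle_mem_Icc hmono hrange i (ne_of_mem_erase hk))
    (mem_erase.2 ⟨Fin.ne_of_val_ne (by rw [h2, Fin.val_zero]; omega), mem_univ 2⟩)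
    (mem_erase.2 ⟨Fin.ne_of_val_ne (by rw [h3, Fin.val_zero]; omega), mem_univ 3⟩)
    (Fin.ne_of_val_ne (by rw [h2, h3]; omega))
    (rotAngle_mem_Ioo hmono hrange i (by omega) (by omega))
    (rotAngle_mem_Ioo hmono hrange i (by omega) (by omega))
  exact ⟨by linarith, by linarith, by linarith, by linarith⟩
end

section
/- Define e(C, θ) = (C·cos θ, sin θ) for C ∈ {−1, 1} and θ ∈ [0°, 90°). Let j ≥ 1, let C₁, ..., C_j ∈ {−1, 1} with R = #{i : Cᵢ = 1} and L = #{i : Cᵢ = −1}, and let θ₁, ..., θ_j ∈ [0°, 90°). Then the sum s = Σᵢ e(Cᵢ, θᵢ) lies in the staircase region based at the point (R − L, 0). -/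
/-!
Induction on the number of summands: the empty sum is the base point of `staircaseRegion 0`,
and adding a unit vector `(± cos θ, sin θ)` with `θ ∈ [0, π/2]` maps `staircaseRegion m` into
`staircaseRegion (m ± 1)`. This is checked for the two staircases separately and band by band:
the step raises the height by `sin θ ≤ 1`, so the new point lies in the band `[ℓ, ℓ + 1]` of the
old one or in the band just above it, and each case is an inequality between distances to the
centres of the unit arcs involved, resting on `cos θ + sin θ ≥ 1`.
-/

open Real

/-- The staircase region based at the lattice point `(m, 0)`: the closed region of the
upper half plane bounded on the left by the leftwards staircase of unit circles (the
union over `ℓ ∈ ℕ` of counterclockwise quarter arcs of unit circles from `(m - ℓ, ℓ)`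
to `(m - ℓ - 1, ℓ + 1)`, centered at `(m - ℓ - 1, ℓ)`) and on the right by the
rightwards staircase of unit circles (the union over `ℓ ∈ ℕ` of clockwise quarter arcs
from `(m + ℓ, ℓ)` to `(m + ℓ + 1, ℓ + 1)`, centered at `(m + ℓ, ℓ + 1)`).  A point
`p = (x, y)` with `ℓ ≤ y ≤ ℓ + 1` belongs to the region iff it lies (weakly) to the
right of the left arc at that height and (weakly) to the left of the right arc. -/
def staircaseRegion (m : ℤ) : Set (ℝ × ℝ) :=
  {p | 0 ≤ p.2 ∧ ∀ ℓ : ℕ, (ℓ : ℝ) ≤ p.2 → p.2 ≤ (ℓ : ℝ) + 1 →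
    (((m : ℝ) - ℓ - 1 ≤ p.1 ∧
        1 ≤ (p.1 - ((m : ℝ) - ℓ - 1)) ^ 2 + (p.2 - ℓ) ^ 2) ∧
      (p.1 ≤ (m : ℝ) + ℓ ∨
        (p.1 - ((m : ℝ) + ℓ)) ^ 2 + (p.2 - ((ℓ : ℝ) + 1)) ^ 2 ≤ 1))}

def RightOfLeftStaircase (m : ℤ) (x y : ℝ) : Prop :=
  ∀ ℓ : ℕ, (ℓ : ℝ) ≤ y → y ≤ (ℓ : ℝ) + 1 →
    (m : ℝ) - ℓ - 1 ≤ x ∧ 1 ≤ (x - ((m : ℝ) - ℓ - 1)) ^ 2 + (y - ℓ) ^ 2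

def LeftOfRightStaircase (m : ℤ) (x y : ℝ) : Prop :=
  ∀ ℓ : ℕ, (ℓ : ℝ) ≤ y → y ≤ (ℓ : ℝ) + 1 →
    x ≤ (m : ℝ) + ℓ ∨ (x - ((m : ℝ) + ℓ)) ^ 2 + (y - ((ℓ : ℝ) + 1)) ^ 2 ≤ 1

lemma mem_staircaseRegion_iff {m : ℤ} {p : ℝ × ℝ} :
    p ∈ staircaseRegion m ↔
      0 ≤ p.2 ∧ RightOfLeftStaircase m p.1 p.2 ∧ LeftOfRightStaircase m p.1 p.2 := by
  simp only [staircaseRegion, Set.mem_ofPred_eq, RightOfLeftStaircase, LeftOfRightStaircase,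
    imp_and, forall_and]

lemma zero_mem_staircaseRegion_zero : ((0 : ℝ), (0 : ℝ)) ∈ staircaseRegion 0 := by
  refine ⟨le_rfl, fun ℓ (hℓ : (ℓ : ℝ) ≤ 0) _ => ?_⟩
  obtain rfl : ℓ = 0 := by exact_mod_cast hℓ.antisymm (Nat.cast_nonneg ℓ)
  norm_num

lemma le_or_exists_eq_add_one_of_le_add {y s : ℝ} {ℓ : ℕ} (hy : 0 ≤ y) (hs : s ≤ 1)
    (hℓ : (ℓ : ℝ) ≤ y + s) :
    (ℓ : ℝ) ≤ y ∨ ∃ k : ℕ, ℓ = k + 1 ∧ (k : ℝ) ≤ y ∧ y ≤ (k : ℝ) + 1 := by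
  rcases le_or_gt (ℓ : ℝ) y with h | h
  · exact Or.inl h
  · obtain ⟨k, rfl⟩ :=
      Nat.exists_eq_succ_of_ne_zero (n := ℓ) (by rintro rfl; simp at h; linarith)
    push_cast at hℓ h
    exact Or.inr ⟨k, rfl, by linarith, h.le⟩

lemma one_sub_le_of_one_le_sq_add_sq {u₁ u₂ c s : ℝ} (hu : 1 ≤ u₁ ^ 2 + u₂ ^ 2)
    (hu₁ : 0 ≤ u₁) (hu₂ : 0 ≤ u₂) (hu₂s : u₂ + s ≤ 1) (hc : 0 ≤ c) (hs : 0 ≤ s)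
    (hcs : c ^ 2 + s ^ 2 = 1) :
    1 - c ≤ u₁ := by
  have : 1 ≤ c + s := by nlinarith [mul_nonneg hc hs]
  nlinarith [mul_nonneg hu₁ hc, sq_nonneg (u₁ - (1 - c)), sq_nonneg (u₁ + 1 - c)]

lemma one_le_sq_sub_add_sq_add {u₁ u₂ c s : ℝ} (hu : 1 ≤ u₁ ^ 2 + u₂ ^ 2)
    (hu₂ : 0 ≤ u₂) (hc : 0 ≤ c) (hs : 0 ≤ s) (hcs : c ^ 2 + s ^ 2 = 1) :
    1 ≤ (u₁ - (1 - c)) ^ 2 + (u₂ + s) ^ 2 := by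
  have hc₁ : c ≤ 1 := by nlinarith
  rcases le_or_gt u₁ 1 with h | h
  · nlinarith [mul_nonneg hu₂ hs, mul_nonneg (sub_nonneg.2 h) (sub_nonneg.2 hc₁)]
  · nlinarith [mul_nonneg hu₂ hs, mul_nonneg (by linarith : (0 : ℝ) ≤ u₁ - 1)
      (by linarith : (0 : ℝ) ≤ u₁ - 1 + 2 * c)]

lemma one_le_sq_add_add_sq_sub {u₁ u₂ c s : ℝ} (hu : 1 ≤ u₁ ^ 2 + u₂ ^ 2) (hu₁ : 0 ≤ u₁)
    (hu₂ : u₂ ≤ 1) (hc : 0 ≤ c) (hcs : c ^ 2 + s ^ 2 = 1) :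
    1 ≤ (u₁ + c) ^ 2 + (u₂ - (1 - s)) ^ 2 := by
  have hs₁ : s ≤ 1 := by nlinarith
  nlinarith [mul_nonneg hu₁ hc, mul_nonneg (sub_nonneg.2 hs₁) (sub_nonneg.2 hu₂)]

lemma one_le_sq_add_add_sq_add {u₁ u₂ a b : ℝ} (hu : 1 ≤ u₁ ^ 2 + u₂ ^ 2) (hu₁ : 0 ≤ u₁)
    (hu₂ : 0 ≤ u₂) (ha : 0 ≤ a) (hb : 0 ≤ b) :
    1 ≤ (u₁ + a) ^ 2 + (u₂ + b) ^ 2 := by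
  nlinarith [mul_nonneg hu₁ ha, mul_nonneg hu₂ hb, sq_nonneg a, sq_nonneg b]

lemma sq_sub_add_sq_add_le_one {w₁ w₂ c s : ℝ} (hw : w₁ ^ 2 + w₂ ^ 2 ≤ 1)
    (hw₁ : 1 - c ≤ w₁) (hw₂ : w₂ + s ≤ 0) (hc₁ : c ≤ 1) (hs : 0 ≤ s) :
    (w₁ - (1 - c)) ^ 2 + (w₂ + s) ^ 2 ≤ 1 := by
  nlinarith [mul_nonneg (sub_nonneg.2 hc₁) (by linarith : (0 : ℝ) ≤ 2 * w₁ - (1 - c)),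
    mul_nonneg hs (by linarith : (0 : ℝ) ≤ -(2 * w₂ + s))]

lemma sq_add_add_sq_add_le_one {w₁ w₂ c s : ℝ} (hw : w₁ ≤ 0 ∨ w₁ ^ 2 + w₂ ^ 2 ≤ 1)
    (hw₁ : c - 1 ≤ w₁) (hw₂ : -1 ≤ w₂) (hw₂s : w₂ + s ≤ 0) (hc : 0 ≤ c) (hs : 0 ≤ s)
    (hcs : c ^ 2 + s ^ 2 = 1) :
    (w₁ + (1 - c)) ^ 2 + (w₂ + s) ^ 2 ≤ 1 := by
  have hc₁ : c ≤ 1 := by nlinarith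
  have hs₁ : s ≤ 1 := by nlinarith
  rcases hw with hw | hw
  · have : 1 ≤ c + s := by nlinarith [mul_nonneg hc hs]
    nlinarith [mul_nonneg (by linarith : (0 : ℝ) ≤ w₁ + 1 - c) (by linarith : (0 : ℝ) ≤ -w₁),
      mul_nonneg (by linarith : (0 : ℝ) ≤ -(w₂ + s)) (by linarith : (0 : ℝ) ≤ 1 + w₂)]
  · have hwc : w₁ ≤ c := by
      nlinarith [mul_nonneg hs (by linarith : (0 : ℝ) ≤ -w₂ - s), sq_nonneg (w₁ + c)]
    nlinarith [mul_nonneg (sub_nonneg.2 hc₁) (sub_nonneg.2 hwc),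
      mul_nonneg hs (by linarith : (0 : ℝ) ≤ -w₂ - s)]

lemma sq_sub_add_sq_sub_le_one {w₁ w₂ c s : ℝ} (hw : w₁ ^ 2 + w₂ ^ 2 ≤ 1)
    (hw₁ : c ≤ w₁) (hw₂ : -s ≤ w₂) (hc : 0 ≤ c) (hcs : c ^ 2 + s ^ 2 = 1) :
    (w₁ - c) ^ 2 + (w₂ - (1 - s)) ^ 2 ≤ 1 := by
  have hs₁ : s ≤ 1 := by nlinarith
  nlinarith [mul_nonneg hc (sub_nonneg.2 hw₁),
    mul_nonneg (sub_nonneg.2 hs₁) (by linarith : (0 : ℝ) ≤ w₂ + s)]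

section Step

variable {m : ℤ} {x y c s : ℝ}

lemma RightOfLeftStaircase.step_right (hy : 0 ≤ y) (hc : 0 ≤ c) (hs : 0 ≤ s)
    (hcs : c ^ 2 + s ^ 2 = 1) (h : RightOfLeftStaircase m x y) :
    RightOfLeftStaircase (m + 1) (x + c) (y + s) := by
  intro ℓ (hℓ : (ℓ : ℝ) ≤ y + s) (hℓ' : y + s ≤ ℓ + 1)
  push_cast
  rcases le_or_exists_eq_add_one_of_le_add hy (by nlinarith) hℓ with hy' | ⟨k, rfl, hk, hk'⟩
  · obtain ⟨h₁, h₂⟩ := h ℓ hy' (by linarith)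
    have := one_sub_le_of_one_le_sq_add_sq (u₂ := y - ℓ) h₂ (by linarith) (by linarith)
      (by linarith) hc hs hcs
    have := one_le_sq_sub_add_sq_add h₂ (by linarith) hc hs hcs
    constructor <;> linarith
  · obtain ⟨h₁, h₂⟩ := h k hk hk'
    have := one_le_sq_add_add_sq_sub h₂ (by linarith) (by linarith) hc hcs
    push_cast
    constructor <;> linarith

lemma RightOfLeftStaircase.step_left (hy : 0 ≤ y) (hs : 0 ≤ s) (hcs : c ^ 2 + s ^ 2 = 1)
    (h : RightOfLeftStaircase m x y) :
    RightOfLeftStaircase (m - 1) (x - c) (y + s) := by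
  have hc₁ : c ≤ 1 := by nlinarith
  intro ℓ (hℓ : (ℓ : ℝ) ≤ y + s) (hℓ' : y + s ≤ ℓ + 1)
  push_cast
  rcases le_or_exists_eq_add_one_of_le_add hy (by nlinarith) hℓ with hy' | ⟨k, rfl, hk, hk'⟩
  · obtain ⟨h₁, h₂⟩ := h ℓ hy' (by linarith)
    have := one_le_sq_add_add_sq_add h₂ (by linarith) (by linarith) (sub_nonneg.2 hc₁) hs
    constructor <;> linarith
  · obtain ⟨h₁, h₂⟩ := h k hk hk'
    push_cast
    have : 1 ≤ x - c - ((m : ℝ) - 1 - (k + 1) - 1) := by linarith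
    constructor <;> nlinarith

lemma LeftOfRightStaircase.step_right (hy : 0 ≤ y) (hs : 0 ≤ s) (hcs : c ^ 2 + s ^ 2 = 1)
    (h : LeftOfRightStaircase m x y) :
    LeftOfRightStaircase (m + 1) (x + c) (y + s) := by
  have hc₁ : c ≤ 1 := by nlinarith
  intro ℓ (hℓ : (ℓ : ℝ) ≤ y + s) (hℓ' : y + s ≤ ℓ + 1)
  push_cast
  rcases le_or_exists_eq_add_one_of_le_add hy (by nlinarith) hℓ with hy' | ⟨k, rfl, hk, hk'⟩
  · rcases le_or_gt (x + c) (m + 1 + ℓ) with h' | h'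
    · exact Or.inl h'
    rcases h ℓ hy' (by linarith) with h₁ | h₁
    · exact Or.inl (by linarith)
    have := sq_sub_add_sq_add_le_one h₁ (by linarith) (by linarith) hc₁ hs
    exact Or.inr (by linarith)
  · have : x ≤ m + k + 1 := by
      rcases h k hk hk' with h₁ | h₁
      · linarith
      · nlinarith
    exact Or.inl (by push_cast; linarith)

lemma LeftOfRightStaircase.step_left (hy : 0 ≤ y) (hc : 0 ≤ c) (hs : 0 ≤ s)
    (hcs : c ^ 2 + s ^ 2 = 1) (h : LeftOfRightStaircase m x y) :
    LeftOfRightStaircase (m - 1) (x - c) (y + s) := by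
  intro ℓ (hℓ : (ℓ : ℝ) ≤ y + s) (hℓ' : y + s ≤ ℓ + 1)
  push_cast
  rcases le_or_gt (x - c) (m - 1 + ℓ) with h' | h'
  · exact Or.inl h'
  refine Or.inr ?_
  rcases le_or_exists_eq_add_one_of_le_add hy (by nlinarith) hℓ with hy' | ⟨k, rfl, hk, hk'⟩
  · have h₁ := (h ℓ hy' (by linarith)).imp_left sub_nonpos.2
    have := sq_add_add_sq_add_le_one h₁ (by linarith) (by linarith) (by linarith) hc hs hcs
    linarith
  · push_cast at hℓ h' ⊢
    have h₁ := (h k hk hk').resolve_left (by linarith)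
    have := sq_sub_add_sq_sub_le_one h₁ (by linarith) (by linarith) hc hcs
    linarith

end Step

lemma add_mem_staircaseRegion_add_one {m : ℤ} {p : ℝ × ℝ} {c s : ℝ} (hc : 0 ≤ c) (hs : 0 ≤ s)
    (hcs : c ^ 2 + s ^ 2 = 1) (hp : p ∈ staircaseRegion m) :
    p + (c, s) ∈ staircaseRegion (m + 1) := by
  obtain ⟨hy, hl, hr⟩ := mem_staircaseRegion_iff.1 hp
  exact mem_staircaseRegion_iff.2 ⟨add_nonneg hy hs, hl.step_right hy hc hs hcs,
    hr.step_right hy hs hcs⟩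

lemma add_mem_staircaseRegion_sub_one {m : ℤ} {p : ℝ × ℝ} {c s : ℝ} (hc : 0 ≤ c) (hs : 0 ≤ s)
    (hcs : c ^ 2 + s ^ 2 = 1) (hp : p ∈ staircaseRegion m) :
    p + (-c, s) ∈ staircaseRegion (m - 1) := by
  obtain ⟨hy, hl, hr⟩ := mem_staircaseRegion_iff.1 hp
  rw [mem_staircaseRegion_iff, Prod.fst_add, Prod.snd_add, ← sub_eq_add_neg]
  exact ⟨add_nonneg hy hs, hl.step_left hy hs hcs, hr.step_left hy hc hs hcs⟩

lemma sum_mem_staircaseRegion_sum_ite {ι : Type*} (t : Finset ι) {C θ : ι → ℝ}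
    (hC : ∀ i ∈ t, C i = 1 ∨ C i = -1) (hθ : ∀ i ∈ t, θ i ∈ Set.Icc 0 (π / 2)) :
    ∑ i ∈ t, (C i * cos (θ i), sin (θ i)) ∈
      staircaseRegion (∑ i ∈ t, if C i = 1 then 1 else -1) := by
  classical
  induction t using Finset.induction_on with
  | empty => exact zero_mem_staircaseRegion_zero
  | insert a t ha ih =>
    rw [Finset.sum_insert ha, Finset.sum_insert ha, add_comm (_ : ℝ × ℝ)]
    have hp := ih (fun i hi => hC i (Finset.mem_insert_of_mem hi))
      (fun i hi => hθ i (Finset.mem_insert_of_mem hi))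
    obtain ⟨hθ₀, hθ₁⟩ := hθ a (Finset.mem_insert_self a t)
    have hc : 0 ≤ cos (θ a) := cos_nonneg_of_mem_Icc ⟨by linarith [pi_pos], hθ₁⟩
    have hs : 0 ≤ sin (θ a) := sin_nonneg_of_nonneg_of_le_pi hθ₀ (by linarith [pi_pos])
    rcases hC a (Finset.mem_insert_self a t) with h | h
    · rw [h, if_pos rfl, one_mul, add_comm 1]
      exact add_mem_staircaseRegion_add_one hc hs (cos_sq_add_sin_sq _) hp
    · rw [h, if_neg (by norm_num), neg_one_mul, neg_add_eq_sub]
      exact add_mem_staircaseRegion_sub_one hc hs (cos_sq_add_sin_sq _) hp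

lemma sum_ite_eq_ncard_sub_ncard {ι : Type*} [Fintype ι] {C : ι → ℝ}
    (hC : ∀ i, C i = 1 ∨ C i = -1) :
    (∑ i, if C i = 1 then (1 : ℤ) else -1) =
      ({i | C i = 1} : Set ι).ncard - ({i | C i = -1} : Set ι).ncard := by
  classical
  have hsign : ∀ i, (if C i = 1 then (1 : ℤ) else -1) =
      (if C i = 1 then 1 else 0) - (if C i = -1 then 1 else 0) := by
    intro i
    rcases hC i with h | h <;> norm_num [h]
  simp only [hsign, Finset.sum_sub_distrib, Finset.sum_boole, Set.ncard_eq_toFinset_card',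
    Set.toFinset_ofPred]

theorem sum_mem_staircaseRegion_general
    (j : ℕ) (C : Fin j → ℝ) (θ : Fin j → ℝ)
    (hC : ∀ i, C i = 1 ∨ C i = -1)
    (hθ : ∀ i, θ i ∈ Set.Ico 0 (π / 2))
    (m : ℤ)
    (hm : m = ({i | C i = 1} : Set (Fin j)).ncard - ({i | C i = -1} : Set (Fin j)).ncard) :
    (∑ i, (C i * Real.cos (θ i), Real.sin (θ i))) ∈ staircaseRegion m := by
  rw [hm, ← sum_ite_eq_ncard_sub_ncard hC]
  exact sum_mem_staircaseRegion_sum_ite Finset.univ (fun i _ => hC i)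
    (fun i _ => Set.Ico_subset_Icc_self (hθ i))

/-- with `e (C, θ) = (C cos θ, sin θ)` for `C ∈ {-1, 1}`, `θ ∈ [0°, 90°)`,
any sum `s = Σᵢ e (Cᵢ, θᵢ)` of `j ≥ 1` such vectors lies in the staircase region based
at `(R - L, 0)`, where `R = #{i : Cᵢ = 1}` and `L = #{i : Cᵢ = -1}`. -/
theorem sum_mem_staircaseRegion
    (j : ℕ) (hj : 1 ≤ j) (C : Fin j → ℝ) (θ : Fin j → ℝ)
    (hC : ∀ i, C i = 1 ∨ C i = -1)
    (hθ : ∀ i, θ i ∈ Set.Ico 0 (π / 2))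
    (m : ℤ)
    (hm : m = ({i | C i = 1} : Set (Fin j)).ncard - ({i | C i = -1} : Set (Fin j)).ncard) :
    (∑ i, (C i * Real.cos (θ i), Real.sin (θ i))) ∈ staircaseRegion m :=
  sum_mem_staircaseRegion_general j C θ hC hθ m hm
end

section
/- The minimum of the function f(φ, θ) = (cos φ + cos θ)² + (sin φ + sin θ − 1)² over (φ, θ) ∈ [0°, 90°] × [0°, 90°] equals 1. -/
open Real

/-- the minimum of `f (φ, θ) = (cos φ + cos θ)² + (sin φ + sin θ - 1)²`
over `(φ, θ) ∈ [0°, 90°] × [0°, 90°]` equals `1`. -/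
theorem arc_fact_min_dist :
    IsLeast
      ((fun q : ℝ × ℝ =>
          (Real.cos q.1 + Real.cos q.2) ^ 2 + (Real.sin q.1 + Real.sin q.2 - 1) ^ 2) ''
        (Set.Icc 0 (π / 2) ×ˢ Set.Icc 0 (π / 2))) 1 := by
  constructor
  · refine ⟨(0, π / 2), ?_, ?_⟩
    · constructor
      · exact Set.mem_Icc.2 ⟨le_refl 0, by positivity⟩
      · exact Set.mem_Icc.2 ⟨by positivity, le_refl _⟩
    · simp
  · rintro x ⟨⟨φ, θ⟩, ⟨⟨hφ0, hφ1⟩, ⟨hθ0, hθ1⟩⟩, rfl⟩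
    simp only
    have hcφ : 0 ≤ Real.cos φ := Real.cos_nonneg_of_mem_Icc ⟨by linarith [Real.pi_pos], hφ1⟩
    have hcθ : 0 ≤ Real.cos θ := Real.cos_nonneg_of_mem_Icc ⟨by linarith [Real.pi_pos], hθ1⟩
    have hsφ : Real.sin φ ≤ 1 := Real.sin_le_one φ
    have hsθ : Real.sin θ ≤ 1 := Real.sin_le_one θ
    have pφ := Real.sin_sq_add_cos_sq φ
    have pθ := Real.sin_sq_add_cos_sq θ
    nlinarith [mul_nonneg hcφ hcθ, mul_nonneg (sub_nonneg.2 hsφ) (sub_nonneg.2 hsθ)]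
end

section
/- Let K be the convex hull of the unbalanced vertices of a geodesic net in the Euclidean plane. Then every balanced vertex of the net lies in the interior of K. -/
/-! If `v` is not interior to `K`, some nonzero linear functional `f` attains its maximum over `K`
at `v`. A vertex maximizing `f` over all vertices is either balanced, or unbalanced and hence in
`K`, in which case `v` maximizes `f` over all vertices as well. Either way some balanced vertex `b`
has all its neighbours in the half-plane `f ≤ f b`; as the unit vectors towards them sum to zero,
they all lie on the line `f = f b`. Since no vertex lies inside an edge, distinct neighbours give
distinct directions, and a line through `b` has only two, contradicting `deg b ≥ 3`. -/

open scoped Classical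

/-- A geodesic net in the Euclidean plane: a finite connected graph embedded in `ℝ²`
whose edges are straight segments between distinct vertices, such that no vertex lies
in the interior of an edge and the interiors of distinct edges are disjoint. -/
structure GeodesicNet where
  verts : Finset (EuclideanSpace ℝ (Fin 2))
  Adj : EuclideanSpace ℝ (Fin 2) → EuclideanSpace ℝ (Fin 2) → Prop
  symm : ∀ u v, Adj u v → Adj v u
  loopless : ∀ v, ¬Adj v v
  mem_of_adj : ∀ u v, Adj u v → u ∈ verts ∧ v ∈ verts
  nonempty : verts.Nonempty
  connected : ∀ u ∈ verts, ∀ v ∈ verts, Relation.ReflTransGen Adj u v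
  no_vertex_inside : ∀ u v, Adj u v → ∀ w ∈ verts, w ∉ openSegment ℝ u v
  edges_disjoint : ∀ u v x y, Adj u v → Adj x y →
    ({u, v} : Set (EuclideanSpace ℝ (Fin 2))) ≠ {x, y} →
    openSegment ℝ u v ∩ openSegment ℝ x y = ∅

namespace GeodesicNet

variable (G : GeodesicNet)

/-- The neighbours of a vertex, as a finset. -/
noncomputable def nbhd (v : EuclideanSpace ℝ (Fin 2)) : Finset (EuclideanSpace ℝ (Fin 2)) :=
  G.verts.filter fun u => G.Adj v u

/-- The unit vector at `v` pointing towards `u`. -/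
noncomputable def dir (_G : GeodesicNet) (v u : EuclideanSpace ℝ (Fin 2)) : EuclideanSpace ℝ (Fin 2) :=
  ‖u - v‖⁻¹ • (u - v)

/-- A vertex is balanced if it has degree at least `3` and the unit vectors along the
incident edges (directed away from the vertex) sum to zero. -/
noncomputable def Balanced (v : EuclideanSpace ℝ (Fin 2)) : Prop :=
  v ∈ G.verts ∧ 3 ≤ (G.nbhd v).card ∧ ∑ u ∈ G.nbhd v, G.dir v u = 0

/-- A vertex is unbalanced if it is a vertex of the net and is not balanced. -/
noncomputable def Unbalanced (v : EuclideanSpace ℝ (Fin 2)) : Prop :=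
  v ∈ G.verts ∧ ¬G.Balanced v

end GeodesicNet

open Module

theorem Submodule.card_le_two_of_finrank_eq_one {E : Type*} [NormedAddCommGroup E]
    [NormedSpace ℝ E] {K : Submodule ℝ E} (hK : finrank ℝ K = 1) {s : Finset E}
    (hs : ∀ x ∈ s, x ∈ K ∧ ‖x‖ = 1) : s.card ≤ 2 := by
  obtain ⟨e, -, hspan⟩ := finrank_eq_one_iff'.1 hK
  set e₁ : E := ‖(e : E)‖⁻¹ • (e : E)
  have hs₁ : s ⊆ {e₁, -e₁} := by
    intro x hx
    obtain ⟨hxK, hx1⟩ := hs x hx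
    obtain ⟨c, hc⟩ := hspan ⟨x, hxK⟩
    have hx : x = c • (e : E) := by simpa using (congrArg Subtype.val hc).symm
    have habs : |c| = ‖(e : E)‖⁻¹ := by
      rw [hx, norm_smul, Real.norm_eq_abs] at hx1
      exact eq_inv_of_mul_eq_one_left hx1
    rcases (abs_eq (by positivity)).1 habs with hc | hc <;> simp [hx, hc, e₁]
  exact (Finset.card_le_card hs₁).trans Finset.card_le_two

theorem exists_ne_zero_forall_eq_of_interior_eq_empty {E : Type*} [NormedAddCommGroup E]
    [NormedSpace ℝ E] [FiniteDimensional ℝ E] [Nontrivial E] {C : Set E} (hC : Convex ℝ C)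
    (h : interior C = ∅) : ∃ f : StrongDual ℝ E, f ≠ 0 ∧ ∃ c, ∀ y ∈ C, f y = c := by
  rcases C.eq_empty_or_nonempty with rfl | ⟨p, hp⟩
  · obtain ⟨x, hx⟩ := exists_ne (0 : E)
    obtain ⟨f, -, hfx⟩ := exists_dual_vector'' ℝ x
    exact ⟨f, fun hf => hx (by simpa [hf] using hfx.symm), 0, by simp⟩
  · have hdir : (affineSpan ℝ C).direction < ⊤ := by
      rw [lt_top_iff_ne_top, Ne, AffineSubspace.direction_eq_top_iff_of_nonempty
        ⟨p, subset_affineSpan ℝ C hp⟩, ← hC.interior_nonempty_iff_affineSpan_eq_top, h]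
      exact Set.not_nonempty_empty
    obtain ⟨f, hf, hker⟩ := Submodule.exists_le_ker_of_lt_top _ hdir
    refine ⟨LinearMap.toContinuousLinearMap f, by simpa using hf, f p, fun y hy => ?_⟩
    have := hker (AffineSubspace.vsub_mem_direction (subset_affineSpan ℝ C hy)
      (subset_affineSpan ℝ C hp))
    simpa [sub_eq_zero] using this

theorem exists_ne_zero_forall_le_of_notMem_interior {E : Type*} [NormedAddCommGroup E]
    [NormedSpace ℝ E] [FiniteDimensional ℝ E] [Nontrivial E] {C : Set E} (hC : Convex ℝ C)
    {x : E} (hx : x ∉ interior C) : ∃ f : StrongDual ℝ E, f ≠ 0 ∧ ∀ y ∈ C, f y ≤ f x := by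
  rcases (interior C).eq_empty_or_nonempty with h | h
  · obtain ⟨f, hf, c, hc⟩ := exists_ne_zero_forall_eq_of_interior_eq_empty hC h
    rcases le_total c (f x) with hcx | hcx
    · exact ⟨f, hf, fun y hy => (hc y hy).trans_le hcx⟩
    · exact ⟨-f, neg_ne_zero.2 hf, fun y hy => by simpa [hc y hy] using hcx⟩
  · exact geometric_hahn_banach_of_nonempty_interior_point hC hx h

namespace GeodesicNet

variable (G : GeodesicNet) {u v : EuclideanSpace ℝ (Fin 2)}

theorem mem_nbhd : u ∈ G.nbhd v ↔ G.Adj v u :=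
  Finset.mem_filter.trans (and_iff_right_of_imp fun h => (G.mem_of_adj v u h).2)

theorem ne_of_mem_nbhd (h : u ∈ G.nbhd v) : u ≠ v := by
  rintro rfl
  exact G.loopless u (G.mem_nbhd.1 h)

theorem nbhd_subset_verts : G.nbhd v ⊆ G.verts :=
  Finset.filter_subset _ _

theorem injOn_dir : Set.InjOn (G.dir v) (G.nbhd v) := by
  intro u₁ h₁ u₂ h₂ hdir
  have hne₁ := G.ne_of_mem_nbhd h₁
  have hne₂ := G.ne_of_mem_nbhd h₂
  rw [Finset.mem_coe, mem_nbhd] at h₁ h₂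
  by_contra hne
  have hray : SameRay ℝ (u₁ -ᵥ v) (u₂ -ᵥ v) :=
    (sameRay_iff_inv_norm_smul_eq_of_ne (sub_ne_zero.2 hne₁) (sub_ne_zero.2 hne₂)).2 hdir
  rcases wbtw_total_of_sameRay_vsub_left hray with h | h
  · exact G.no_vertex_inside v u₂ h₂ u₁ (G.mem_of_adj v u₁ h₁).2
      (openSegment_eq_image_lineMap ℝ v u₂ ▸ Sbtw.mem_image_Ioo ⟨h, hne₁, hne⟩)
  · exact G.no_vertex_inside v u₁ h₁ u₂ (G.mem_of_adj v u₂ h₂).2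
      (openSegment_eq_image_lineMap ℝ v u₁ ▸ Sbtw.mem_image_Ioo ⟨h, hne₂, Ne.symm hne⟩)

variable {G}

theorem Balanced.exists_nbhd_lt (hv : G.Balanced v)
    {f : EuclideanSpace ℝ (Fin 2) →ₗ[ℝ] ℝ} (hf : f ≠ 0) : ∃ u ∈ G.nbhd v, f v < f u := by
  obtain ⟨-, hcard, hsum⟩ := hv
  by_contra! hmax
  have hdir_nonpos : ∀ u ∈ G.nbhd v, f (G.dir v u) ≤ 0 := fun u hu => by
    rw [dir, map_smul, map_sub, smul_eq_mul]
    exact mul_nonpos_of_nonneg_of_nonpos (by positivity) (sub_nonpos.2 (hmax u hu))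
  have hdir_ker : ∀ u ∈ G.nbhd v, f (G.dir v u) = 0 :=
    (Finset.sum_eq_zero_iff_of_nonpos hdir_nonpos).1 (by rw [← map_sum, hsum, map_zero])
  have hker : finrank ℝ (LinearMap.ker f) = 1 := by
    have := Module.Dual.finrank_ker_add_one_of_ne_zero hf
    rw [finrank_euclideanSpace_fin] at this
    omega
  have himage : ((G.nbhd v).image (G.dir v)).card ≤ 2 :=
    Submodule.card_le_two_of_finrank_eq_one hker fun d hd => by
      obtain ⟨u, hu, rfl⟩ := Finset.mem_image.1 hd
      exact ⟨hdir_ker u hu, norm_smul_inv_norm (sub_ne_zero.2 (G.ne_of_mem_nbhd hu))⟩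
  rw [Finset.card_image_of_injOn G.injOn_dir] at himage
  omega

end GeodesicNet

/-- Convex Hull Property: every balanced vertex of a geodesic net in the
Euclidean plane lies in the interior of the convex hull `K` of the unbalanced
vertices. -/
theorem balanced_mem_interior_convexHull_unbalanced
    (G : GeodesicNet) (v : EuclideanSpace ℝ (Fin 2)) (hv : G.Balanced v) :
    v ∈ interior (convexHull ℝ {u | G.Unbalanced u}) := by
  by_contra hvK
  obtain ⟨f, hf, hfK⟩ := exists_ne_zero_forall_le_of_notMem_interior (convex_convexHull ℝ _) hvK
  obtain ⟨w, hw, hwmax⟩ := G.verts.exists_max_image f G.nonempty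
  obtain ⟨b, hb, hbmax⟩ : ∃ b, G.Balanced b ∧ ∀ u ∈ G.verts, f u ≤ f b := by
    by_cases hwb : G.Balanced w
    · exact ⟨w, hwb, hwmax⟩
    · exact ⟨v, hv, fun u hu => (hwmax u hu).trans (hfK w (subset_convexHull ℝ _ ⟨hw, hwb⟩))⟩
  obtain ⟨u, hu, hlt⟩ :=
    hb.exists_nbhd_lt (f := f.toLinearMap) (ContinuousLinearMap.coe_injective.ne hf)
  exact (hbmax u (G.nbhd_subset_verts hu)).not_gt hlt
end
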